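/- arXiv:2209.10203 — 3 statements merged into one kernel-verified Lean document; each statement's English description precedes it below -/
import Mathlib

section
/- Let {a_j} be a solution of the inviscid dyadic model on [0,∞) whose initial data satisfies ‖a(0)‖_{H^1} < ∞ and a(0) ≠ 0 (i.e. a_j(0) ≠ 0 for some j ≥ 0). Then the solution blows up in finite time in H^1: there exists a finite time T > 0 such that sup_{0 ≤ t < T} ‖a(t)‖_{H^1} = ∞. -/
open MeasureTheory Filter
open scoped ENNReal

/-- The (possibly infinite) squared `H^s` norm of a sequence, with `λ_j = lam ^ j`:
`‖a‖_{H^s}² = Σ_j λ_j^{2s} a_j²`. -/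
noncomputable def Hsq (lam s : ℝ) (a : ℕ → ℝ) : ℝ≥0∞ :=
  ∑' j : ℕ, ENNReal.ofReal ((lam ^ j) ^ (2 * s) * (a j) ^ 2)

/-- A solution of the inviscid dyadic model on `[0,∞)`:
`a_j' = λ_j a_{j-1}² − λ_{j+1} a_j a_{j+1}`, with the convention `a_{-1} ≡ 0`. -/
def IsInviscidSol (lam : ℝ) (a : ℕ → ℝ → ℝ) : Prop :=
  ∀ j : ℕ, ∀ t ∈ Set.Ici (0 : ℝ),
    HasDerivWithinAt (a j)
      (lam ^ j * (if j = 0 then (0 : ℝ) else a (j - 1) t) ^ 2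
        - lam ^ (j + 1) * a j t * a (j + 1) t) (Set.Ici 0) t

/-!
Suppose the `H¹` norm stays bounded on `[0, T]`, so that `λʲ |a_j(t)| ≤ B`. The energy flux
`2 λ^{n+1} a_n² a_{n+1}` out of the shells `j ≤ n` is then `O(B³ λ^{-2n})`, so for `n` large the
truncated energy `∑_{j ≤ n} a_j²` stays close to `E = ∑_j a_j(0)²` on all of `[0, T]`.
Writing `λ = μ⁸`, the functional `P = ∑_{k ≤ n+1} μ^{-2k} a_k` is bounded by a constant depending
only on `μ` and `E`, while AM-GM on the cross terms `a_j a_{j+1}` (which needs the weight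
`μ^{-2} = λ^{-1/4}` to exceed `λ^{-1/3}`) shows `P' ≥ (μ - 1) E / 2` up to tails of size
`O(B² μ^{-10n})`. Hence `T` is bounded by a constant independent of `B`.
-/

open Set

noncomputable def dyadicField (lam : ℝ) (x : ℕ → ℝ) (j : ℕ) : ℝ :=
  lam ^ j * (if j = 0 then 0 else x (j - 1)) ^ 2 - lam ^ (j + 1) * x j * x (j + 1)

lemma sum_mul_dyadicField (lam : ℝ) (x : ℕ → ℝ) (n : ℕ) :
    ∑ j ∈ Finset.range (n + 1), x j * dyadicField lam x j
      = -(lam ^ (n + 1) * x n ^ 2 * x (n + 1)) := by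
  induction n with
  | zero =>
    simp only [zero_add, Finset.sum_range_one, dyadicField, ↓reduceIte]
    ring
  | succ n ih =>
    rw [Finset.sum_range_succ, ih]
    simp only [dyadicField, Nat.succ_ne_zero, if_false, Nat.add_sub_cancel]
    ring

lemma sub_le_sum_inv_pow_mul_dyadicField {μ : ℝ} (hμ : 1 ≤ μ) (x : ℕ → ℝ) (n : ℕ) :
    (μ - 1) * ∑ j ∈ Finset.range n, x j ^ 2 - μ ^ (6 * n + 5) * x n ^ 2
        - μ ^ (6 * n + 11) * x (n + 1) ^ 2 / 2
      ≤ ∑ k ∈ Finset.range (n + 1), (μ ^ 2)⁻¹ ^ k * dyadicField (μ ^ 8) x k := by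
  induction n with
  | zero =>
    have hμ0 : 0 ≤ μ := zero_le_one.trans hμ
    have hamgm : 0 ≤ μ ^ 5 * (x 0 - μ ^ 3 * x 1) ^ 2 := by positivity
    have hsq : 0 ≤ μ ^ 5 * x 0 ^ 2 := by positivity
    simp only [zero_add, Finset.range_zero, Finset.sum_empty, Finset.sum_range_one, dyadicField,
      ↓reduceIte]
    linear_combination (hamgm + hsq) / 2
  | succ n ih =>
    have hterm : (μ ^ 2)⁻¹ ^ (n + 1) * dyadicField (μ ^ 8) x (n + 1)
        = μ ^ (6 * n + 6) * x n ^ 2 - μ ^ (6 * n + 14) * x (n + 1) * x (n + 2) := by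
      simp only [dyadicField, Nat.succ_ne_zero, if_false, Nat.add_sub_cancel]
      rw [inv_pow, ← pow_mul]
      field_simp
      ring
    rw [Finset.sum_range_succ _ (n + 1), hterm, Finset.sum_range_succ]
    have hdiag : 0 ≤ (μ - 1) * (μ ^ (6 * n + 5) - 1) * x n ^ 2 :=
      mul_nonneg (mul_nonneg (sub_nonneg.2 hμ) (sub_nonneg.2 (one_le_pow₀ hμ))) (sq_nonneg _)
    have hamgm : 0 ≤ μ ^ (6 * n + 11) * (x (n + 1) - μ ^ 3 * x (n + 2)) ^ 2 / 2 := by positivity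
    linear_combination ih + hdiag + hamgm

lemma mul_le_sub_of_le_hasDerivWithinAt {f f' : ℝ → ℝ} {a b C : ℝ} (hab : a ≤ b)
    (hf : ∀ x ∈ Icc a b, HasDerivWithinAt f (f' x) (Icc a b) x)
    (hC : ∀ x ∈ Icc a b, C ≤ f' x) : C * (b - a) ≤ f b - f a := by
  have hg : ∀ x ∈ Icc a b, HasDerivWithinAt (fun y => f y - C * y) (f' x - C) (Icc a b) x :=
    fun x hx => ((hf x hx).fun_sub ((hasDerivWithinAt_id x _).const_mul C)).congr_deriv (by ring)
  have hmono : MonotoneOn (fun y => f y - C * y) (Icc a b) :=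
    monotoneOn_of_hasDerivWithinAt_nonneg (convex_Icc a b)
      (fun x hx => (hg x hx).continuousWithinAt)
      (fun x hx => (hg x (interior_subset hx)).mono interior_subset)
      (fun x hx => sub_nonneg.2 (hC x (interior_subset hx)))
  have := hmono (left_mem_Icc.2 hab) (right_mem_Icc.2 hab) hab
  linarith

lemma abs_sum_pow_mul_le {θ : ℝ} (h0 : 0 ≤ θ) (h1 : θ < 1) (x : ℕ → ℝ) (n : ℕ) :
    |∑ k ∈ Finset.range n, θ ^ k * x k| ≤ (1 - θ)⁻¹ + ∑ k ∈ Finset.range n, x k ^ 2 := by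
  have hterm : ∀ k, |θ ^ k * x k| ≤ θ ^ k + x k ^ 2 := fun k => by
    have hk0 : 0 ≤ θ ^ k := pow_nonneg h0 k
    have hk1 : θ ^ k ≤ 1 := pow_le_one₀ h0 h1.le
    rw [abs_mul, abs_of_nonneg hk0, ← sq_abs (x k)]
    nlinarith [sq_nonneg (|x k| - θ ^ k / 2), mul_nonneg hk0 (sub_nonneg.2 hk1)]
  calc |∑ k ∈ Finset.range n, θ ^ k * x k|
      ≤ ∑ k ∈ Finset.range n, |θ ^ k * x k| := Finset.abs_sum_le_sum_abs _ _
    _ ≤ ∑ k ∈ Finset.range n, (θ ^ k + x k ^ 2) := Finset.sum_le_sum fun k _ => hterm k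
    _ ≤ (1 - θ)⁻¹ + ∑ k ∈ Finset.range n, x k ^ 2 := by
      rw [Finset.sum_add_distrib]
      refine add_le_add_left ?_ _
      have := geom_sum_Ico_le_of_lt_one (m := 0) (n := n) h0 h1
      rwa [pow_zero, one_div, ← Finset.range_eq_Ico] at this

lemma eventually_mul_pow_le {r : ℝ} (h0 : 0 ≤ r) (h1 : r < 1) (C : ℝ) {ε : ℝ} (hε : 0 < ε) :
    ∀ᶠ n : ℕ in atTop, C * r ^ n ≤ ε :=
  ((tendsto_pow_atTop_nhds_zero_of_lt_one h0 h1).const_mul C).eventually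
    (ge_mem_nhds (by simpa using hε))

lemma abs_pow_mul_sq_mul_le {lam B : ℝ} (hlam : 0 < lam) {x : ℕ → ℝ}
    (hx : ∀ j, lam ^ j * |x j| ≤ B) (n : ℕ) :
    |lam ^ (n + 1) * x n ^ 2 * x (n + 1)| ≤ B ^ 3 * (lam ^ 2)⁻¹ ^ n := by
  calc |lam ^ (n + 1) * x n ^ 2 * x (n + 1)|
      = (lam ^ n * |x n|) ^ 2 * (lam ^ (n + 1) * |x (n + 1)|) * (lam ^ 2)⁻¹ ^ n := by
        rw [abs_mul, abs_mul, abs_of_pos (pow_pos hlam _), abs_of_nonneg (sq_nonneg _), inv_pow,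
          ← pow_mul]
        field_simp
        rw [sq_abs]
        ring
    _ ≤ B ^ 2 * B * (lam ^ 2)⁻¹ ^ n := by gcongr <;> exact hx _
    _ = B ^ 3 * (lam ^ 2)⁻¹ ^ n := by ring

lemma pow_mul_sq_le {μ B y : ℝ} (hμ : 1 ≤ μ) {j m n : ℕ} (hy : (μ ^ 8) ^ j * |y| ≤ B)
    (hmn : m + 10 * n ≤ 16 * j) : μ ^ m * y ^ 2 ≤ B ^ 2 * (μ ^ 10)⁻¹ ^ n := by
  rw [inv_pow, ← div_eq_mul_inv, le_div_iff₀ (by positivity)]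
  calc μ ^ m * y ^ 2 * (μ ^ 10) ^ n = μ ^ (m + 10 * n) * y ^ 2 := by ring
    _ ≤ μ ^ (16 * j) * y ^ 2 := by gcongr
    _ = ((μ ^ 8) ^ j * |y|) ^ 2 := by rw [mul_pow, sq_abs]; ring
    _ ≤ B ^ 2 := by gcongr

lemma Hsq_one_eq (lam : ℝ) (x : ℕ → ℝ) :
    Hsq lam 1 x = ∑' j, ENNReal.ofReal ((lam ^ j) ^ 2 * x j ^ 2) := by
  simp only [Hsq, mul_one, Real.rpow_two]

lemma summable_sq_of_Hsq_ne_top {lam : ℝ} (hlam : 1 ≤ lam) {x : ℕ → ℝ} (h : Hsq lam 1 x ≠ ⊤) :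
    Summable fun j => x j ^ 2 := by
  rw [Hsq_one_eq] at h
  refine (ENNReal.summable_toReal h).of_nonneg_of_le (fun j => sq_nonneg _) fun j => ?_
  rw [ENNReal.toReal_ofReal (by positivity)]
  exact le_mul_of_one_le_left (sq_nonneg _) (one_le_pow₀ (one_le_pow₀ hlam))

lemma pow_mul_abs_le_sqrt {lam M : ℝ} (hlam : 0 ≤ lam) (hM : 0 ≤ M) {x : ℕ → ℝ}
    (h : Hsq lam 1 x ≤ ENNReal.ofReal M) (j : ℕ) : lam ^ j * |x j| ≤ √M := by
  rw [← abs_of_nonneg (pow_nonneg hlam j), ← abs_mul]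
  refine Real.abs_le_sqrt ?_
  rw [mul_pow, ← ENNReal.ofReal_le_ofReal_iff hM]
  rw [Hsq_one_eq] at h
  exact (ENNReal.le_tsum j).trans h

lemma exists_pow_mul_abs_le_of_iSup_Hsq_ne_top {lam : ℝ} (hlam : 0 ≤ lam) {a : ℕ → ℝ → ℝ}
    {s : Set ℝ} (h : (⨆ t ∈ s, Hsq lam 1 (fun j => a j t)) ≠ ⊤) :
    ∃ B, ∀ t ∈ s, ∀ j, lam ^ j * |a j t| ≤ B :=
  ⟨_, fun t ht => pow_mul_abs_le_sqrt hlam ENNReal.toReal_nonneg <| by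
    rw [ENNReal.ofReal_toReal h]; exact le_biSup (fun t => Hsq lam 1 (fun j => a j t)) ht⟩

namespace IsInviscidSol

variable {lam μ E T B : ℝ} {a : ℕ → ℝ → ℝ}

lemma hasDerivWithinAt (hsol : IsInviscidSol lam a) (j : ℕ) {t : ℝ} (ht : t ∈ Ici 0) :
    HasDerivWithinAt (a j) (dyadicField lam (fun i => a i t) j) (Ici 0) t :=
  hsol j t ht

lemma hasDerivWithinAt_sum_mul (hsol : IsInviscidSol lam a) (w : ℕ → ℝ) (s : Finset ℕ)
    {t : ℝ} (ht : t ∈ Ici 0) :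
    HasDerivWithinAt (fun u => ∑ k ∈ s, w k * a k u)
      (∑ k ∈ s, w k * dyadicField lam (fun i => a i t) k) (Ici 0) t :=
  HasDerivWithinAt.fun_sum fun k _ => (hsol.hasDerivWithinAt k ht).const_mul (w k)

lemma hasDerivWithinAt_sum_sq (hsol : IsInviscidSol lam a) (n : ℕ) {t : ℝ} (ht : t ∈ Ici 0) :
    HasDerivWithinAt (fun u => ∑ j ∈ Finset.range (n + 1), a j u ^ 2)
      (-(2 * (lam ^ (n + 1) * a n t ^ 2 * a (n + 1) t))) (Ici 0) t := by
  refine (HasDerivWithinAt.fun_sum fun j _ => (hsol.hasDerivWithinAt j ht).fun_pow 2).congr_deriv ?_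
  rw [← mul_neg, ← sum_mul_dyadicField lam (fun i => a i t) n, Finset.mul_sum]
  refine Finset.sum_congr rfl fun j _ => ?_
  push_cast
  ring

lemma abs_sum_sq_sub_le (hsol : IsInviscidSol lam a) (hlam : 0 < lam)
    (hB : ∀ t ∈ Icc 0 T, ∀ j, lam ^ j * |a j t| ≤ B) (n : ℕ) {t : ℝ} (ht : t ∈ Icc 0 T) :
    |∑ j ∈ Finset.range (n + 1), a j t ^ 2 - ∑ j ∈ Finset.range (n + 1), a j 0 ^ 2|
      ≤ 2 * B ^ 3 * (lam ^ 2)⁻¹ ^ n * t := by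
  have := norm_image_sub_le_of_norm_deriv_le_segment'
    (fun s hs => (hsol.hasDerivWithinAt_sum_sq n hs.1).mono Icc_subset_Ici_self)
    (fun s hs => by
      rw [Real.norm_eq_abs, abs_neg, abs_mul, abs_two]
      exact mul_le_mul_of_nonneg_left
        (abs_pow_mul_sq_mul_le hlam (hB s (Ico_subset_Icc_self hs)) n) zero_le_two) t ht
  simpa only [Real.norm_eq_abs, sub_zero, mul_assoc] using this

theorem mul_le_of_bounded_of_cutoff (hμ : 1 < μ) (hsol : IsInviscidSol (μ ^ 8) a)
    (hE : HasSum (fun j => a j 0 ^ 2) E) (hT : 0 ≤ T)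
    (hB : ∀ t ∈ Icc 0 T, ∀ j, (μ ^ 8) ^ j * |a j t| ≤ B) {n : ℕ}
    (hn : 3 * E / 4 ≤ ∑ j ∈ Finset.range (n + 1), a j 0 ^ 2)
    (hflux : ∀ m ≥ n, 2 * B ^ 3 * T * ((μ ^ 8) ^ 2)⁻¹ ^ m ≤ E / 4)
    (herr : 2 * B ^ 2 * (μ ^ 10)⁻¹ ^ n ≤ (μ - 1) * E / 4) :
    (μ - 1) * E * T ≤ 8 * ((1 - (μ ^ 2)⁻¹)⁻¹ + 2 * E) := by
  have hB0 : 0 ≤ B := (by positivity : 0 ≤ (μ ^ 8) ^ 0 * |a 0 0|).trans (hB 0 ⟨le_rfl, hT⟩ 0)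
  have hdrift : ∀ m ≥ n, ∀ t ∈ Icc 0 T,
      |∑ j ∈ Finset.range (m + 1), a j t ^ 2 - ∑ j ∈ Finset.range (m + 1), a j 0 ^ 2| ≤ E / 4 :=
    fun m hm t ht => (hsol.abs_sum_sq_sub_le (by positivity) hB m ht).trans <|
      calc 2 * B ^ 3 * ((μ ^ 8) ^ 2)⁻¹ ^ m * t ≤ 2 * B ^ 3 * ((μ ^ 8) ^ 2)⁻¹ ^ m * T :=
            mul_le_mul_of_nonneg_left ht.2 <|
              mul_nonneg (mul_nonneg zero_le_two (pow_nonneg hB0 3)) (by positivity)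
        _ ≤ E / 4 := (le_of_eq (by ring)).trans (hflux m hm)
  have hlow : ∀ t ∈ Icc 0 T, E / 2 ≤ ∑ j ∈ Finset.range (n + 1), a j t ^ 2 := fun t ht => by
    linarith [(abs_le.1 (hdrift n le_rfl t ht)).1]
  have hup : ∀ t ∈ Icc 0 T, ∑ j ∈ Finset.range (n + 2), a j t ^ 2 ≤ 2 * E := fun t ht => by
    rw [show n + 2 = n + 1 + 1 from rfl]
    linarith [(abs_le.1 (hdrift (n + 1) (by omega) t ht)).2,
      sum_le_hasSum (Finset.range (n + 1 + 1)) (fun _ _ => sq_nonneg _) hE,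
      hE.nonneg fun _ => sq_nonneg _]
  set P : ℝ → ℝ := fun t => ∑ k ∈ Finset.range (n + 2), (μ ^ 2)⁻¹ ^ k * a k t
  have hP' : ∀ t ∈ Icc 0 T, (μ - 1) * E / 4
      ≤ ∑ k ∈ Finset.range (n + 2), (μ ^ 2)⁻¹ ^ k * dyadicField (μ ^ 8) (fun i => a i t) k := by
    intro t ht
    have h1 : μ ^ (6 * (n + 1) + 5) * a (n + 1) t ^ 2 ≤ B ^ 2 * (μ ^ 10)⁻¹ ^ n :=
      pow_mul_sq_le hμ.le (hB t ht (n + 1)) (by omega)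
    have h2 : μ ^ (6 * (n + 1) + 11) * a (n + 2) t ^ 2 ≤ B ^ 2 * (μ ^ 10)⁻¹ ^ n :=
      pow_mul_sq_le hμ.le (hB t ht (n + 2)) (by omega)
    have h3 := mul_le_mul_of_nonneg_left (hlow t ht) (sub_nonneg.2 hμ.le)
    have h4 := sub_le_sum_inv_pow_mul_dyadicField hμ.le (fun i => a i t) (n + 1)
    have h5 : 0 ≤ B ^ 2 * (μ ^ 10)⁻¹ ^ n := by positivity
    linarith
  have hP : ∀ t ∈ Icc 0 T, |P t| ≤ (1 - (μ ^ 2)⁻¹)⁻¹ + 2 * E := fun t ht =>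
    (abs_sum_pow_mul_le (by positivity) (inv_lt_one_of_one_lt₀ (one_lt_pow₀ hμ two_ne_zero))
      _ _).trans (by linarith [hup t ht])
  have hPinc : (μ - 1) * E / 4 * (T - 0) ≤ P T - P 0 :=
    mul_le_sub_of_le_hasDerivWithinAt hT
      (fun t ht => (hsol.hasDerivWithinAt_sum_mul _ _ ht.1).mono Icc_subset_Ici_self) hP'
  linarith [abs_le.1 (hP T ⟨hT, le_rfl⟩), abs_le.1 (hP 0 ⟨le_rfl, hT⟩)]

theorem mul_le_of_bounded (hμ : 1 < μ) (hsol : IsInviscidSol (μ ^ 8) a)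
    (hE : HasSum (fun j => a j 0 ^ 2) E) (hE0 : 0 < E) (hT : 0 ≤ T)
    (hB : ∀ t ∈ Icc 0 T, ∀ j, (μ ^ 8) ^ j * |a j t| ≤ B) :
    (μ - 1) * E * T ≤ 8 * ((1 - (μ ^ 2)⁻¹)⁻¹ + 2 * E) := by
  have h1 : ∀ᶠ n : ℕ in atTop, 3 * E / 4 ≤ ∑ j ∈ Finset.range (n + 1), a j 0 ^ 2 :=
    (hE.tendsto_sum_nat.comp (tendsto_add_atTop_nat 1)).eventually
      (eventually_ge_nhds (by linarith))
  have hlam : 1 < μ ^ 8 := one_lt_pow₀ hμ (by norm_num)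
  have h2 := eventually_forall_ge_atTop.2 <| eventually_mul_pow_le (r := ((μ ^ 8) ^ 2)⁻¹)
    (by positivity) (inv_lt_one_of_one_lt₀ (one_lt_pow₀ hlam two_ne_zero))
    (2 * B ^ 3 * T) (by positivity : 0 < E / 4)
  have h3 := eventually_mul_pow_le (r := (μ ^ 10)⁻¹) (by positivity)
    (inv_lt_one_of_one_lt₀ (one_lt_pow₀ hμ (by norm_num))) (2 * B ^ 2)
    (by nlinarith : 0 < (μ - 1) * E / 4)
  obtain ⟨n, hn, hflux, herr⟩ := (h1.and (h2.and h3)).exists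
  exact hsol.mul_le_of_bounded_of_cutoff hμ hE hT hB hn hflux herr

end IsInviscidSol

theorem inviscid_dyadic_blowup_H1_general (lam : ℝ) (hlam : 1 < lam) (a : ℕ → ℝ → ℝ)
    (hsol : IsInviscidSol lam a)
    (hne : ∃ j : ℕ, a j 0 ≠ 0) :
    ∃ T : ℝ, 0 < T ∧ (⨆ t ∈ Set.Ico (0 : ℝ) T, Hsq lam 1 (fun j => a j t)) = ⊤ := by
  by_contra! hbdd
  obtain ⟨μ, hμ, rfl⟩ : ∃ μ : ℝ, 1 < μ ∧ lam = μ ^ 8 :=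
    ⟨lam ^ ((8 : ℕ) : ℝ)⁻¹, Real.one_lt_rpow hlam (by norm_num),
      (Real.rpow_inv_natCast_pow (by linarith) (by norm_num)).symm⟩
  have hE := (summable_sq_of_Hsq_ne_top hlam.le <| ne_top_of_le_ne_top (hbdd 1 one_pos) <|
    le_biSup (fun t => Hsq (μ ^ 8) 1 (fun j => a j t)) ⟨le_rfl, one_pos⟩).hasSum
  obtain ⟨j, hj⟩ := hne
  have hE0 : 0 < ∑' j, a j 0 ^ 2 := hE.summable.tsum_pos (fun _ => sq_nonneg _) j (by positivity)
  set E := ∑' j, a j 0 ^ 2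
  set R := (1 - (μ ^ 2)⁻¹)⁻¹ + 2 * E
  have hR : 0 < R :=
    add_pos (inv_pos.2 (sub_pos.2 (inv_lt_one_of_one_lt₀ (one_lt_pow₀ hμ two_ne_zero))))
      (by positivity)
  have hγE : 0 < (μ - 1) * E := mul_pos (by linarith) hE0
  set T := 8 * R / ((μ - 1) * E) + 1
  have hT : 0 ≤ T := by positivity
  obtain ⟨B, hB⟩ :=
    exists_pow_mul_abs_le_of_iSup_Hsq_ne_top (by positivity) (hbdd (T + 1) (by linarith))
  have hTR := hsol.mul_le_of_bounded hμ hE hE0 hT fun t ht => hB t ⟨ht.1, by linarith [ht.2]⟩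
  have : (μ - 1) * E * T = 8 * R + (μ - 1) * E := by
    rw [mul_add, mul_one, mul_div_cancel₀ _ hγE.ne']
  linarith

/-- Kiselev–Zlatoš: any nonzero `H^1` solution of the inviscid dyadic model blows up
in finite time in `H^1`. -/
theorem inviscid_dyadic_blowup_H1 (lam : ℝ) (hlam : 1 < lam) (a : ℕ → ℝ → ℝ)
    (hsol : IsInviscidSol lam a)
    (hinit : Hsq lam 1 (fun j => a j 0) < ⊤)
    (hne : ∃ j : ℕ, a j 0 ≠ 0) :
    ∃ T : ℝ, 0 < T ∧ (⨆ t ∈ Set.Ico (0 : ℝ) T, Hsq lam 1 (fun j => a j t)) = ⊤ :=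
  inviscid_dyadic_blowup_H1_general lam hlam a hsol hne
end

section
/- Let {a_j} be a positive solution of the inviscid dyadic model on [0,∞) (i.e. a_j(t) > 0 for all j ≥ 0 and t ≥ 0) whose initial data is componentwise positive and bounded: sup_{j≥0} a_j(0) < ∞. Then the energy is finite for all positive time: for every t > 0, Σ_{j≥0} a_j(t)² < ∞. -/
open MeasureTheory Filter
open scoped ENNReal

/-!
The partial energies `E_N = ∑_{j ≤ N} a_j²` are nonincreasing, since the nonlinear terms
telescope to `E_N' = -2 λ_{N+1} a_N² a_{N+1} ≤ 0`. This bounds every mode, `a_n ≤ M (n + 1)`, and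
the total flux out of mode `n`: `2 λ_{n+1} ∫₀ᵗ a_n² a_{n+1} ≤ (n + 1) M²`.
Conversely, mode `n + 1` is fed at rate `λ_{n+1} a_n²` and drained at rate at most
`c_n = λ_{n+2} M (n + 3)`, so on a window of length `≤ 1 / c_n` Duhamel's formula makes the flux
at least `λ_{n+1} (∫ a_n²)² / (2e)`. Cutting `[0, t]` into about `t c_n` such windows and applying
Cauchy–Schwarz yields `λⁿ (∫₀ᵗ a_n²)² = O(n²)`, hence `∑_n ∫₀ᵗ a_n² < ∞`; finally
`t E_N(t) ≤ ∫₀ᵗ E_N ≤ ∑_n ∫₀ᵗ a_n²` because `E_N` is nonincreasing.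
-/

open Set Real

theorem hasDerivAt_integral_of_continuousOn_Icc {g : ℝ → ℝ} {r s x : ℝ}
    (hg : ContinuousOn g (Icc r s)) (hx : x ∈ Ioo r s) :
    HasDerivAt (fun w => ∫ v in r..w, g v) (g x) x :=
  intervalIntegral.integral_hasDerivAt_right
    ((hg.mono (uIcc_of_le hx.1.le ▸ Icc_subset_Icc_right hx.2.le)).intervalIntegrable)
    ((hg.mono Ioo_subset_Icc_self).stronglyMeasurableAtFilter isOpen_Ioo x hx)
    (hg.continuousAt (Icc_mem_nhds hx.1 hx.2))

theorem continuousOn_primitive_Icc {g : ℝ → ℝ} {r s : ℝ} (hrs : r ≤ s)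
    (hg : ContinuousOn g (Icc r s)) :
    ContinuousOn (fun w => ∫ v in r..w, g v) (Icc r s) := by
  rw [← uIcc_of_le hrs] at hg ⊢
  exact intervalIntegral.continuousOn_primitive_interval (hg.integrableOn_compact isCompact_uIcc)

theorem integral_mul_primitive_eq {g : ℝ → ℝ} {r s : ℝ} (hrs : r ≤ s)
    (hg : ContinuousOn g (Icc r s)) :
    ∫ x in r..s, g x * ∫ v in r..x, g v = (∫ x in r..s, g x) ^ 2 / 2 := by
  have hG := continuousOn_primitive_Icc hrs hg
  have hftc := intervalIntegral.integral_eq_sub_of_hasDerivAt_of_le hrs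
    (f := fun w => (∫ v in r..w, g v) ^ 2 / 2) (f' := fun x => g x * ∫ v in r..x, g v)
    ((hG.pow 2).div_const 2)
    (fun x hx => by
      refine (((hasDerivAt_integral_of_continuousOn_Icc hg hx).fun_pow 2).div_const 2).congr_deriv
        ?_
      ring)
    ((hg.mul hG).intervalIntegrable_of_Icc hrs)
  simpa using hftc

theorem exp_neg_mul_integral_le_of_hasDerivAt {f f' g : ℝ → ℝ} {c r s : ℝ} (hc : 0 ≤ c)
    (hrs : r ≤ s) (hf : ContinuousOn f (Icc r s)) (hf' : ∀ x ∈ Ioo r s, HasDerivAt f (f' x) x)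
    (hg : ContinuousOn g (Icc r s)) (hg₀ : ∀ x ∈ Ioo r s, 0 ≤ g x)
    (hfg : ∀ x ∈ Ioo r s, g x - c * f x ≤ f' x) (hfr : 0 ≤ f r) :
    exp (-(c * (s - r))) * ∫ x in r..s, g x ≤ f s := by
  set H : ℝ → ℝ := fun w => exp (c * w) * f w - exp (c * r) * ∫ v in r..w, g v
  -- `H' = e^{cw} (f' + c f) - e^{cr} g ≥ (e^{cw} - e^{cr}) g ≥ 0`
  have hH : MonotoneOn H (Icc r s) := by
    refine monotoneOn_of_hasDerivWithinAt_nonneg (convex_Icc r s)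
      (f' := fun x => exp (c * x) * (f' x + c * f x) - exp (c * r) * g x) ?_ ?_ ?_
    · exact (((continuous_const.mul continuous_id).rexp.continuousOn).mul hf).sub
        (continuousOn_const.mul (continuousOn_primitive_Icc hrs hg))
    · intro x hx
      rw [interior_Icc] at hx ⊢
      have he : HasDerivAt (fun w => exp (c * w)) (exp (c * x) * c) x := by
        simpa using ((hasDerivAt_id x).const_mul c).exp
      refine (((he.fun_mul (hf' x hx)).fun_sub
        ((hasDerivAt_integral_of_continuousOn_Icc hg hx).const_mul (exp (c * r)))).congr_deriv
        ?_).hasDerivWithinAt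
      ring
    · intro x hx
      rw [interior_Icc] at hx
      have hexp : exp (c * r) ≤ exp (c * x) := exp_le_exp.2 (by nlinarith [hx.1])
      nlinarith [hfg x hx, hg₀ x hx, exp_pos (c * x),
        mul_le_mul_of_nonneg_right hexp (hg₀ x hx)]
  have hHrs := hH (left_mem_Icc.2 hrs) (right_mem_Icc.2 hrs) hrs
  simp only [H, intervalIntegral.integral_same, mul_zero, sub_zero] at hHrs
  have hrs' : exp (c * r) * ∫ x in r..s, g x ≤ exp (c * s) * f s := by
    linarith [mul_nonneg (exp_pos (c * r)).le hfr]
  calc exp (-(c * (s - r))) * ∫ x in r..s, g x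
      = exp (-(c * s)) * (exp (c * r) * ∫ x in r..s, g x) := by
        rw [← mul_assoc, ← exp_add]; ring_nf
    _ ≤ exp (-(c * s)) * (exp (c * s) * f s) := by gcongr
    _ = f s := by rw [← mul_assoc, ← exp_add]; simp

theorem add_mul_div_mem_Icc {r s : ℝ} {i K : ℕ} (hrs : r ≤ s) (hi : i ≤ K) :
    r + i * ((s - r) / K) ∈ Icc r s := by
  refine ⟨le_add_of_nonneg_right (by have := sub_nonneg.2 hrs; positivity), ?_⟩
  rcases K.eq_zero_or_pos with rfl | hK
  · simpa using hrs
  calc r + i * ((s - r) / K) ≤ r + K * ((s - r) / K) := by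
        gcongr
    _ = s := by field_simp; ring

theorem sum_integral_uniform_partition {f : ℝ → ℝ} {r s : ℝ} {K : ℕ} (hrs : r ≤ s) (hK : K ≠ 0)
    (hf : IntervalIntegrable f volume r s) :
    ∑ i ∈ Finset.range K, ∫ x in (r + i * ((s - r) / K))..(r + (i + 1 : ℕ) * ((s - r) / K)), f x
      = ∫ x in r..s, f x := by
  rw [intervalIntegral.sum_integral_adjacent_intervals (a := fun i => r + i * ((s - r) / K))
    fun i hi => hf.mono_set <| uIcc_subset_uIcc
      (Icc_subset_uIcc (add_mul_div_mem_Icc hrs hi.le))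
      (Icc_subset_uIcc (add_mul_div_mem_Icc hrs hi))]
  congr 1
  · simp
  · field_simp; ring

theorem sq_integral_le_of_forall_window {g h : ℝ → ℝ} {κ δ r s : ℝ} (hκ : 0 ≤ κ) (hδ : 0 < δ)
    (hrs : r < s) (hg : IntervalIntegrable g volume r s) (hh : IntervalIntegrable h volume r s)
    (hwin : ∀ u v, r ≤ u → u ≤ v → v ≤ s → v - u ≤ δ →
      κ * (∫ x in u..v, g x) ^ 2 ≤ ∫ x in u..v, h x) :
    κ * (∫ x in r..s, g x) ^ 2 ≤ ((s - r) / δ + 1) * ∫ x in r..s, h x := by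
  set K : ℕ := ⌈(s - r) / δ⌉₊
  have hK : (0 : ℝ) < K := by simpa [K] using div_pos (sub_pos.2 hrs) hδ
  have hK₀ : K ≠ 0 := by exact_mod_cast hK.ne'
  set p : ℕ → ℝ := fun i => r + i * ((s - r) / K)
  set x : ℕ → ℝ := fun i => ∫ y in p i..p (i + 1), g y
  have hgx : ∑ i ∈ Finset.range K, x i = ∫ y in r..s, g y :=
    sum_integral_uniform_partition hrs.le hK₀ hg
  have hx : κ * ∑ i ∈ Finset.range K, x i ^ 2 ≤ ∫ y in r..s, h y := by
    rw [Finset.mul_sum, ← sum_integral_uniform_partition hrs.le hK₀ hh]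
    refine Finset.sum_le_sum fun i hi => ?_
    have hi := Finset.mem_range.1 hi
    refine hwin _ _ (add_mul_div_mem_Icc hrs.le hi.le).1 ?_ (add_mul_div_mem_Icc hrs.le hi).2 ?_
    · have : 0 ≤ (s - r) / K := div_nonneg (sub_nonneg.2 hrs.le) hK.le
      simp only [p]; gcongr; omega
    · simp only [p]; push_cast
      rw [show r + (i + 1) * ((s - r) / K) - (r + i * ((s - r) / K)) = (s - r) / K by ring,
        div_le_iff₀ hK, ← div_le_iff₀' hδ]
      exact Nat.le_ceil _
  have hh₀ : 0 ≤ ∫ y in r..s, h y :=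
    (mul_nonneg hκ (Finset.sum_nonneg fun i _ => sq_nonneg _)).trans hx
  calc κ * (∫ y in r..s, g y) ^ 2 ≤ κ * (K * ∑ i ∈ Finset.range K, x i ^ 2) := by
        rw [← hgx]
        gcongr
        simpa using sq_sum_le_card_mul_sum_sq (s := Finset.range K) (f := x)
    _ ≤ K * ∫ y in r..s, h y := by rw [mul_left_comm]; gcongr
    _ ≤ ((s - r) / δ + 1) * ∫ y in r..s, h y := by
        gcongr
        exact (Nat.ceil_lt_add_one (div_pos (sub_pos.2 hrs) hδ).le).le

theorem summable_of_pow_mul_sq_le {x : ℕ → ℝ} {lam C : ℝ} (hlam : 1 < lam) (hx : ∀ n, 0 ≤ x n)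
    (h : ∀ n, lam ^ n * x n ^ 2 ≤ C * ((n : ℝ) + 3) ^ 2) : Summable x := by
  set q := (√lam)⁻¹
  have hq : ‖q‖ < 1 := by
    rw [norm_inv, Real.norm_of_nonneg (sqrt_nonneg _)]
    exact inv_lt_one_of_one_lt₀ (by rwa [lt_sqrt zero_le_one, one_pow])
  have hC : 0 ≤ C := by
    have := (mul_nonneg (pow_nonneg (by linarith) 0) (sq_nonneg (x 0))).trans (h 0)
    exact nonneg_of_mul_nonneg_left this (by positivity)
  have hbound : ∀ n, x n ≤ √C * ((n : ℝ) + 3) * q ^ n := fun n => by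
    have hlamn : 0 < lam ^ n := pow_pos (by linarith) n
    refine (pow_le_pow_iff_left₀ (hx n) (by positivity) two_ne_zero).1 ?_
    rw [mul_pow, mul_pow, sq_sqrt hC, ← pow_mul, mul_comm n, pow_mul, inv_pow, inv_pow,
      sq_sqrt (by linarith), le_mul_inv_iff₀ hlamn, mul_comm]
    exact h n
  have hsum : Summable fun n : ℕ => √C * ((n : ℝ) + 3) * q ^ n := by
    have := ((summable_pow_mul_geometric_of_norm_lt_one 1 hq).add
      ((summable_geometric_of_norm_lt_one hq).mul_left 3)).mul_left √C
    refine this.congr fun n => ?_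
    simp only [pow_one]; ring
  exact hsum.of_nonneg_of_le hx hbound

def partialEnergy (a : ℕ → ℝ → ℝ) (N : ℕ) (t : ℝ) : ℝ :=
  ∑ j ∈ Finset.range (N + 1), a j t ^ 2

theorem partialEnergy_le_of_le {a : ℕ → ℝ → ℝ} {M t : ℝ} (h₀ : ∀ j, 0 ≤ a j t)
    (hM : ∀ j, a j t ≤ M) (N : ℕ) : partialEnergy a N t ≤ (N + 1) * M ^ 2 := by
  calc partialEnergy a N t ≤ ∑ _j ∈ Finset.range (N + 1), M ^ 2 :=
        Finset.sum_le_sum fun j _ => pow_le_pow_left₀ (h₀ j) (hM j) 2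
    _ = (N + 1) * M ^ 2 := by simp

namespace IsInviscidSol

variable {lam : ℝ} {a : ℕ → ℝ → ℝ}

theorem continuousOn (hsol : IsInviscidSol lam a) (j : ℕ) : ContinuousOn (a j) (Ici 0) :=
  fun t ht => (hsol j t ht).continuousWithinAt

theorem hasDerivAt (hsol : IsInviscidSol lam a) (j : ℕ) {t : ℝ} (ht : 0 < t) :
    HasDerivAt (a j) (lam ^ j * (if j = 0 then (0 : ℝ) else a (j - 1) t) ^ 2
      - lam ^ (j + 1) * a j t * a (j + 1) t) t :=
  (hsol j t ht.le).hasDerivAt (Ici_mem_nhds ht)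

theorem hasDerivAt_succ (hsol : IsInviscidSol lam a) (n : ℕ) {t : ℝ} (ht : 0 < t) :
    HasDerivAt (a (n + 1))
      (lam ^ (n + 1) * a n t ^ 2 - lam ^ (n + 2) * a (n + 1) t * a (n + 2) t) t := by
  simpa using hsol.hasDerivAt (n + 1) ht

theorem continuousOn_partialEnergy (hsol : IsInviscidSol lam a) (N : ℕ) :
    ContinuousOn (partialEnergy a N) (Ici 0) :=
  continuousOn_finsetSum _ fun j _ => (hsol.continuousOn j).pow 2

theorem hasDerivAt_partialEnergy (hsol : IsInviscidSol lam a) (N : ℕ) {t : ℝ} (ht : 0 < t) :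
    HasDerivAt (partialEnergy a N) (-(2 * lam ^ (N + 1) * (a N t ^ 2 * a (N + 1) t))) t := by
  induction N with
  | zero =>
    have h0 : partialEnergy a 0 = fun s => a 0 s ^ 2 := by ext s; simp [partialEnergy]
    rw [h0]
    refine ((hsol.hasDerivAt 0 ht).fun_pow 2).congr_deriv ?_
    simp only [if_true]
    ring
  | succ N ih =>
    have hsplit : partialEnergy a (N + 1) = fun s => partialEnergy a N s + a (N + 1) s ^ 2 := by
      ext s; exact Finset.sum_range_succ _ _
    rw [hsplit]
    refine (ih.fun_add ((hsol.hasDerivAt_succ N ht).fun_pow 2)).congr_deriv ?_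
    push_cast
    ring

theorem antitoneOn_partialEnergy (hsol : IsInviscidSol lam a) (hlam : 0 ≤ lam)
    (hnn : ∀ j t, 0 ≤ t → 0 ≤ a j t) (N : ℕ) : AntitoneOn (partialEnergy a N) (Ici 0) := by
  refine antitoneOn_of_hasDerivWithinAt_nonpos (convex_Ici 0) (hsol.continuousOn_partialEnergy N)
    (f' := fun t => -(2 * lam ^ (N + 1) * (a N t ^ 2 * a (N + 1) t))) (fun t ht => ?_)
    (fun t ht => ?_)
  · rw [interior_Ici] at ht ⊢
    exact (hsol.hasDerivAt_partialEnergy N ht).hasDerivWithinAt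
  · rw [interior_Ici] at ht
    have := hnn (N + 1) t (le_of_lt ht)
    have := pow_nonneg hlam (N + 1)
    have := sq_nonneg (a N t)
    simp only [neg_nonpos]
    positivity

theorem le_mul_add_one (hsol : IsInviscidSol lam a) (hlam : 0 ≤ lam)
    (hnn : ∀ j t, 0 ≤ t → 0 ≤ a j t) {M : ℝ} (hM : ∀ j, a j 0 ≤ M) (n : ℕ) {t : ℝ}
    (ht : 0 ≤ t) : a n t ≤ M * (n + 1) := by
  have hM₀ : 0 ≤ M := (hnn 0 0 le_rfl).trans (hM 0)
  have hsq : a n t ^ 2 ≤ (M * (n + 1)) ^ 2 :=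
    calc a n t ^ 2 ≤ partialEnergy a n t :=
          Finset.single_le_sum (f := fun j => a j t ^ 2) (fun j _ => sq_nonneg _)
            (Finset.self_mem_range_succ n)
      _ ≤ partialEnergy a n 0 :=
          hsol.antitoneOn_partialEnergy hlam hnn n self_mem_Ici ht ht
      _ ≤ (n + 1) * M ^ 2 := partialEnergy_le_of_le (fun j => hnn j 0 le_rfl) hM n
      _ ≤ (M * (n + 1)) ^ 2 := by nlinarith [sq_nonneg M, (n.cast_nonneg : (0 : ℝ) ≤ n)]
  exact (abs_le_of_sq_le_sq hsq (by positivity)).trans' (le_abs_self _)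

theorem continuousOn_Icc (hsol : IsInviscidSol lam a) (j : ℕ) {r s : ℝ} (hr : 0 ≤ r) :
    ContinuousOn (a j) (Icc r s) :=
  (hsol.continuousOn j).mono fun _ hx => hr.trans hx.1

theorem integral_flux_le (hsol : IsInviscidSol lam a)
    (hnn : ∀ j t, 0 ≤ t → 0 ≤ a j t) {M : ℝ} (hM : ∀ j, a j 0 ≤ M) (n : ℕ) {t : ℝ}
    (ht : 0 ≤ t) :
    2 * lam ^ (n + 1) * ∫ s in 0..t, a n s ^ 2 * a (n + 1) s ≤ (n + 1) * M ^ 2 := by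
  have hftc := intervalIntegral.integral_eq_sub_of_hasDerivAt_of_le ht
    ((hsol.continuousOn_partialEnergy n).mono Icc_subset_Ici_self)
    (fun x hx => hsol.hasDerivAt_partialEnergy n hx.1)
    ((((hsol.continuousOn_Icc n le_rfl).fun_pow 2).fun_mul
      (hsol.continuousOn_Icc (n + 1) le_rfl)).const_mul _ |>.neg.intervalIntegrable_of_Icc ht)
  rw [intervalIntegral.integral_neg, intervalIntegral.integral_const_mul] at hftc
  have hEt : 0 ≤ partialEnergy a n t := Finset.sum_nonneg fun j _ => sq_nonneg _
  linarith [partialEnergy_le_of_le (fun j => hnn j 0 le_rfl) hM n]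

/-- Duhamel's formula for `a_{n+1}' ≥ λ_{n+1} a_n² - c a_{n+1}`. -/
theorem exp_neg_mul_integral_le (hsol : IsInviscidSol lam a) (hlam : 0 ≤ lam)
    (hnn : ∀ j t, 0 ≤ t → 0 ≤ a j t) {n : ℕ} {c : ℝ}
    (hc : ∀ y, 0 < y → lam ^ (n + 2) * a (n + 2) y ≤ c) {r s : ℝ} (hr : 0 ≤ r) (hrs : r ≤ s) :
    exp (-(c * (s - r))) * ∫ x in r..s, lam ^ (n + 1) * a n x ^ 2 ≤ a (n + 1) s := by
  have hc₀ : 0 ≤ c := (mul_nonneg (pow_nonneg hlam _) (hnn _ _ zero_le_one)).trans (hc 1 one_pos)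
  refine exp_neg_mul_integral_le_of_hasDerivAt hc₀ hrs (hsol.continuousOn_Icc _ hr)
    (fun x hx => hsol.hasDerivAt_succ n (hr.trans_lt hx.1))
    (continuousOn_const.mul ((hsol.continuousOn_Icc n hr).fun_pow 2))
    (fun x _ => by positivity) (fun x hx => ?_) (hnn _ _ hr)
  have hx₀ : 0 < x := hr.trans_lt hx.1
  have := mul_le_mul_of_nonneg_right (hc x hx₀) (hnn (n + 1) x hx₀.le)
  linarith

theorem pow_mul_sq_integral_le_flux (hsol : IsInviscidSol lam a) (hlam : 0 ≤ lam)
    (hnn : ∀ j t, 0 ≤ t → 0 ≤ a j t) {n : ℕ} {c : ℝ}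
    (hc : ∀ y, 0 < y → lam ^ (n + 2) * a (n + 2) y ≤ c) {r s : ℝ} (hr : 0 ≤ r) (hrs : r ≤ s)
    (hlen : c * (s - r) ≤ 1) :
    lam ^ (n + 1) * (∫ x in r..s, a n x ^ 2) ^ 2
      ≤ 2 * exp 1 * ∫ x in r..s, a n x ^ 2 * a (n + 1) x := by
  have hc₀ : 0 ≤ c := (mul_nonneg (pow_nonneg hlam _) (hnn _ _ zero_le_one)).trans (hc 1 one_pos)
  have hg : ContinuousOn (fun x => a n x ^ 2) (Icc r s) := (hsol.continuousOn_Icc n hr).fun_pow 2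
  have hlower : ∀ x ∈ Icc r s,
      a n x ^ 2 * (exp (-1) * lam ^ (n + 1) * ∫ v in r..x, a n v ^ 2)
        ≤ a n x ^ 2 * a (n + 1) x := by
    intro x hx
    have hexp : exp (-1) ≤ exp (-(c * (x - r))) :=
      exp_le_exp.2 (by nlinarith [hx.1, hx.2])
    have hI : 0 ≤ lam ^ (n + 1) * ∫ v in r..x, a n v ^ 2 :=
      mul_nonneg (pow_nonneg hlam _) (intervalIntegral.integral_nonneg hx.1 fun _ _ => sq_nonneg _)
    have := hsol.exp_neg_mul_integral_le hlam hnn hc hr hx.1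
    rw [intervalIntegral.integral_const_mul] at this
    gcongr
    rw [mul_assoc]
    exact (mul_le_mul_of_nonneg_right hexp hI).trans this
  have hG := continuousOn_primitive_Icc hrs hg
  have hmono := intervalIntegral.integral_mono_on hrs
    ((hg.fun_mul (continuousOn_const.fun_mul hG)).intervalIntegrable_of_Icc (μ := volume) hrs)
    ((hg.fun_mul (hsol.continuousOn_Icc (n + 1) hr)).intervalIntegrable_of_Icc hrs) hlower
  have hsq : ∫ x in r..s, a n x ^ 2 * (exp (-1) * lam ^ (n + 1) * ∫ v in r..x, a n v ^ 2)
      = exp (-1) * lam ^ (n + 1) * ((∫ x in r..s, a n x ^ 2) ^ 2 / 2) := by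
    rw [← integral_mul_primitive_eq hrs hg, ← intervalIntegral.integral_const_mul]
    congr 1; ext x; ring
  have hexp : exp 1 * exp (-1) = 1 := by rw [← exp_add]; simp
  rw [hsq] at hmono
  calc lam ^ (n + 1) * (∫ x in r..s, a n x ^ 2) ^ 2
      = 2 * exp 1 * (exp (-1) * lam ^ (n + 1) * ((∫ x in r..s, a n x ^ 2) ^ 2 / 2)) := by
        linear_combination (lam ^ (n + 1) * (∫ x in r..s, a n x ^ 2) ^ 2) * hexp.symm
    _ ≤ 2 * exp 1 * ∫ x in r..s, a n x ^ 2 * a (n + 1) x := by gcongr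

theorem sq_pow_mul_integral_le (hsol : IsInviscidSol lam a) (hlam : 0 ≤ lam)
    (hnn : ∀ j t, 0 ≤ t → 0 ≤ a j t) {M : ℝ} (hM : ∀ j, a j 0 ≤ M) {n : ℕ} {c : ℝ}
    (hc : ∀ y, 0 < y → lam ^ (n + 2) * a (n + 2) y ≤ c) (hc₀ : 0 < c) {t : ℝ} (ht : 0 < t) :
    (lam ^ (n + 1) * ∫ x in 0..t, a n x ^ 2) ^ 2 ≤ exp 1 * (t * c + 1) * ((n + 1) * M ^ 2) := by
  have hwindows := sq_integral_le_of_forall_window (pow_nonneg hlam (n + 1)) (one_div_pos.2 hc₀)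
    ht (((hsol.continuousOn_Icc n le_rfl).fun_pow 2).intervalIntegrable_of_Icc ht.le)
    ((((hsol.continuousOn_Icc n le_rfl).fun_pow 2).fun_mul
      (hsol.continuousOn_Icc (n + 1) le_rfl)).intervalIntegrable_of_Icc ht.le |>.const_mul
        (2 * exp 1))
    fun u v hu huv _ hlen => by
      rw [intervalIntegral.integral_const_mul]
      refine hsol.pow_mul_sq_integral_le_flux hlam hnn hc hu huv ?_
      rwa [le_div_iff₀' hc₀] at hlen
  rw [intervalIntegral.integral_const_mul, div_div_eq_mul_div, div_one, sub_zero] at hwindows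
  calc (lam ^ (n + 1) * ∫ x in 0..t, a n x ^ 2) ^ 2
      = lam ^ (n + 1) * (lam ^ (n + 1) * (∫ x in 0..t, a n x ^ 2) ^ 2) := by ring
    _ ≤ lam ^ (n + 1) * ((t * c + 1) * (2 * exp 1 * ∫ x in 0..t, a n x ^ 2 * a (n + 1) x)) :=
        mul_le_mul_of_nonneg_left hwindows (by positivity)
    _ = exp 1 * (t * c + 1) * (2 * lam ^ (n + 1) * ∫ x in 0..t, a n x ^ 2 * a (n + 1) x) := by
        ring
    _ ≤ exp 1 * (t * c + 1) * ((n + 1) * M ^ 2) :=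
        mul_le_mul_of_nonneg_left (hsol.integral_flux_le hnn hM n ht.le) (by positivity)

theorem pow_mul_sq_integral_le (hsol : IsInviscidSol lam a) (hlam : 1 < lam)
    (hnn : ∀ j t, 0 ≤ t → 0 ≤ a j t) {M : ℝ} (hM : ∀ j, a j 0 ≤ M) (hM₀ : 0 < M) {t : ℝ}
    (ht : 0 < t) (n : ℕ) :
    lam ^ n * (∫ x in 0..t, a n x ^ 2) ^ 2 ≤ exp 1 * M ^ 2 * (t * M + 1) * ((n : ℝ) + 3) ^ 2 := by
  have hlam₀ : 0 ≤ lam := by linarith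
  set c := lam ^ (n + 2) * (M * ((n : ℝ) + 3))
  have hc : ∀ y, 0 < y → lam ^ (n + 2) * a (n + 2) y ≤ c := fun y hy => by
    have := hsol.le_mul_add_one hlam₀ hnn hM (n + 2) hy.le
    push_cast at this
    calc lam ^ (n + 2) * a (n + 2) y ≤ lam ^ (n + 2) * (M * ((n : ℝ) + 2 + 1)) := by gcongr
      _ = c := by ring
  have hc_le : t * c + 1 ≤ lam ^ (n + 2) * ((n : ℝ) + 3) * (t * M + 1) := by
    have : 1 ≤ lam ^ (n + 2) * ((n : ℝ) + 3) :=
      one_le_mul_of_one_le_of_one_le (one_le_pow₀ hlam.le) (by linarith [n.cast_nonneg (α := ℝ)])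
    nlinarith
  refine le_of_mul_le_mul_left ?_ (pow_pos (by linarith : 0 < lam) (n + 2))
  calc lam ^ (n + 2) * (lam ^ n * (∫ x in 0..t, a n x ^ 2) ^ 2)
      = (lam ^ (n + 1) * ∫ x in 0..t, a n x ^ 2) ^ 2 := by ring
    _ ≤ exp 1 * (t * c + 1) * ((n + 1) * M ^ 2) :=
        hsol.sq_pow_mul_integral_le hlam₀ hnn hM hc (by positivity) ht
    _ ≤ exp 1 * (lam ^ (n + 2) * ((n : ℝ) + 3) * (t * M + 1)) * (((n : ℝ) + 3) * M ^ 2) :=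
        mul_le_mul (mul_le_mul_of_nonneg_left hc_le (exp_pos 1).le) (by gcongr; linarith)
          (by positivity) (by positivity)
    _ = lam ^ (n + 2) * (exp 1 * M ^ 2 * (t * M + 1) * ((n : ℝ) + 3) ^ 2) := by ring

theorem mul_partialEnergy_le (hsol : IsInviscidSol lam a) (hlam : 0 ≤ lam)
    (hnn : ∀ j t, 0 ≤ t → 0 ≤ a j t) {t : ℝ} (ht : 0 ≤ t) (N : ℕ) :
    t * partialEnergy a N t ≤ ∑ n ∈ Finset.range (N + 1), ∫ x in 0..t, a n x ^ 2 :=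
  calc t * partialEnergy a N t = ∫ _ in 0..t, partialEnergy a N t := by simp
    _ ≤ ∫ x in 0..t, partialEnergy a N x :=
        intervalIntegral.integral_mono_on ht intervalIntegrable_const
          (((hsol.continuousOn_partialEnergy N).mono Icc_subset_Ici_self).intervalIntegrable_of_Icc
            ht) fun x hx => hsol.antitoneOn_partialEnergy hlam hnn N hx.1 (hx.1.trans hx.2) hx.2
    _ = ∑ n ∈ Finset.range (N + 1), ∫ x in 0..t, a n x ^ 2 :=
        intervalIntegral.integral_finsetSum fun n _ =>
          ((hsol.continuousOn_Icc n le_rfl).fun_pow 2).intervalIntegrable_of_Icc ht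

end IsInviscidSol

/-- Barbato–Flandoli–Morandin: a positive solution of the inviscid dyadic model whose
initial data is componentwise positive and bounded has finite energy for all `t > 0`. -/
theorem inviscid_positive_finite_energy (lam : ℝ) (hlam : 1 < lam)
    (a : ℕ → ℝ → ℝ) (hsol : IsInviscidSol lam a)
    (hpos : ∀ j : ℕ, ∀ t : ℝ, 0 ≤ t → 0 < a j t)
    (hbdd : ∃ M : ℝ, ∀ j : ℕ, a j 0 ≤ M) :
    ∀ t : ℝ, 0 < t → Summable (fun j : ℕ => (a j t) ^ 2) := by
  obtain ⟨M, hM⟩ := hbdd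
  have hnn : ∀ j t, 0 ≤ t → 0 ≤ a j t := fun j t ht => (hpos j t ht).le
  have hM₀ : 0 < M := (hpos 0 0 le_rfl).trans_le (hM 0)
  intro t ht
  have hI₀ : ∀ n, 0 ≤ ∫ x in 0..t, a n x ^ 2 := fun n =>
    intervalIntegral.integral_nonneg ht.le fun _ _ => sq_nonneg _
  have hI : Summable fun n => ∫ x in 0..t, a n x ^ 2 :=
    summable_of_pow_mul_sq_le hlam hI₀ (hsol.pow_mul_sq_integral_le hlam hnn hM hM₀ ht)
  refine summable_of_sum_range_le (c := (∑' n, ∫ x in 0..t, a n x ^ 2) / t)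
    (fun _ => sq_nonneg _) fun N => (le_div_iff₀' ht).2 ?_
  calc t * ∑ j ∈ Finset.range N, a j t ^ 2 ≤ t * partialEnergy a N t := by
        rw [partialEnergy, Finset.sum_range_succ]
        gcongr
        exact le_add_of_nonneg_right (sq_nonneg _)
    _ ≤ ∑ n ∈ Finset.range (N + 1), ∫ x in 0..t, a n x ^ 2 :=
        hsol.mul_partialEnergy_le (by linarith) hnn ht.le N
    _ ≤ ∑' n, ∫ x in 0..t, a n x ^ 2 := hI.sum_le_tsum _ fun n _ => hI₀ n
end

section
/- For every ν > 0 there exists a unique componentwise-positive, finite-energy fixed point a^{ν,*} of the viscous forced dyadic model, i.e. a unique sequence with a^{ν,*}_j > 0 for all j ≥ 0 and Σ_{j≥0} (a^{ν,*}_j)² < ∞ satisfying −ν λ_j² a^{ν,*}_j + λ_j^θ (a^{ν,*}_{j-1})² − λ_{j+1}^θ a^{ν,*}_j a^{ν,*}_{j+1} + f_j = 0 for all j ≥ 0, and its energy dissipation rate ε^ν := ν Σ_{j≥0} λ_j² (a^{ν,*}_j)² satisfies ε^ν = f_0 a^{ν,*}_0. Moreover, as ν → 0, a^{ν,*} converges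 in ℓ² to the inviscid fixed point a* given by a*_j = f_0^{1/2} λ^{−θ(j+1)/3}, and the dissipation anomaly holds: lim_{ν→0} ε^ν = f_0 a*_0 > 0. -/
open MeasureTheory Filter
open scoped ENNReal

/-- A (time-independent) fixed point of the viscous forced dyadic model:
`−ν λ_j² c_j + λ_j^θ c_{j-1}² − λ_{j+1}^θ c_j c_{j+1} + f_j = 0`, with
`λ_j = lam ^ j`, `c_{-1} = 0`, `f_0 = f0` and `f_j = 0` for `j ≥ 1`. -/
def IsViscFixedPt (lam θ f0 ν : ℝ) (c : ℕ → ℝ) : Prop :=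
  ∀ j : ℕ,
    -(ν * (lam ^ j) ^ 2 * c j)
      + (lam ^ j) ^ θ * (if j = 0 then (0 : ℝ) else c (j - 1)) ^ 2
      - (lam ^ (j + 1)) ^ θ * c j * c (j + 1) + (if j = 0 then f0 else 0) = 0

/-- The inviscid fixed point `a*_j = f₀^{1/2} λ^{−θ(j+1)/3}`. -/
noncomputable def astar (lam θ f0 : ℝ) (j : ℕ) : ℝ :=
  Real.sqrt f0 * lam ^ (-(θ * ((j : ℝ) + 1)) / 3)

/-!
Writing `a_j = a*_j B_{j+1}` with `B_0 = 1` turns the fixed-point equations into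
`B_j ^ 2 = B_{j+1} (B_{j+2} + δ q ^ j)`, where `δ = ν / (f₀^{1/2} λ^{θ/3})` and
`q = λ^{(6-2θ)/3} > 1`; the inviscid fixed point is `B ≡ 1`.

For a positive solution the telescoping identity
`∑_{j<N} δ q^j B_{j+1}^2 = B_1 - B_N^2 B_{N+1}` forces `B → 0` and is the energy balance
`ε^ν = f₀ a_0`; looking at the index where `B` is largest bounds `B` by `max 1 √q`,
uniformly in `δ`. For two positive solutions, `(-1)^j (C_j - B_j)` keeps one sign, is
eventually nondecreasing and tends to `0`, so `B = C`. Solutions exist as limits of the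
truncated systems with `B_{n+2} = 0`, which are solved backwards from `B_{n+1}` and
normalised by the intermediate value theorem. As `δ → 0` every limit point solves
`B_j^2 = B_{j+1} B_{j+2}` and is bounded; then `log B_{j+1} = log B_1 - 2 log B_j`, which
stays bounded only if `B ≡ 1`. The uniform bound upgrades this componentwise convergence
to `ℓ²` convergence by dominated convergence.
-/

open Topology

namespace DyadicModel

structure IsReducedFixedPt (δ q : ℝ) (B : ℕ → ℝ) : Prop where
  apply_zero : B 0 = 1
  sq_eq (j : ℕ) : B j ^ 2 = B (j + 1) * (B (j + 2) + δ * q ^ j)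

namespace IsReducedFixedPt

variable {δ q : ℝ} {B C : ℕ → ℝ}

theorem sum_range (hB : IsReducedFixedPt δ q B) (N : ℕ) :
    ∑ j ∈ Finset.range N, δ * q ^ j * B (j + 1) ^ 2 = B 1 - B N ^ 2 * B (N + 1) := by
  induction N with
  | zero => simp [hB.apply_zero]
  | succ n ih =>
    rw [Finset.sum_range_succ, ih]
    linear_combination (-B (n + 1)) * hB.sq_eq n

theorem antitone_mul_sq (hδ : 0 ≤ δ) (hq : 0 ≤ q) (hB : IsReducedFixedPt δ q B) :
    Antitone fun j => B (j + 1) * B j ^ 2 := by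
  refine antitone_nat_of_succ_le fun j => ?_
  show B (j + 2) * B (j + 1) ^ 2 ≤ B (j + 1) * B j ^ 2
  have : B (j + 1) * B j ^ 2 - B (j + 2) * B (j + 1) ^ 2 = δ * q ^ j * B (j + 1) ^ 2 := by
    rw [hB.sq_eq j]; ring
  nlinarith [this, show 0 ≤ δ * q ^ j * B (j + 1) ^ 2 by positivity]

section Positive

variable (hδ : 0 < δ) (hq : 1 < q) (hB : IsReducedFixedPt δ q B) (hpos : ∀ j, 0 < B j)
include hδ hq hB hpos

theorem summable : Summable fun j => δ * q ^ j * B (j + 1) ^ 2 :=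
  summable_of_sum_range_le (c := B 1) (fun j => by positivity) fun N => by
    rw [hB.sum_range]
    nlinarith [hpos N, hpos (N + 1)]

theorem tendsto_zero : Tendsto B atTop (𝓝 0) := by
  have hterm := (hB.summable hδ hq hpos).tendsto_atTop_zero.div_const δ
  rw [zero_div] at hterm
  have hsq : Tendsto (fun j => B (j + 1) ^ 2) atTop (𝓝 0) := by
    refine squeeze_zero (fun j => sq_nonneg _) (fun j => ?_) hterm
    rw [le_div_iff₀ hδ]
    have : 0 ≤ δ * (q ^ j - 1) * B (j + 1) ^ 2 :=
      mul_nonneg (mul_nonneg hδ.le (sub_nonneg.2 (one_le_pow₀ hq.le))) (sq_nonneg _)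
    linarith
  have := hsq.sqrt
  simp only [Real.sqrt_sq (hpos _).le, Real.sqrt_zero] at this
  exact (tendsto_add_atTop_iff_nat 1).1 this

theorem hasSum : HasSum (fun j => δ * q ^ j * B (j + 1) ^ 2) (B 1) := by
  have hB0 := hB.tendsto_zero hδ hq hpos
  have hrem : Tendsto (fun N => B N ^ 2 * B (N + 1)) atTop (𝓝 0) := by
    simpa using (hB0.pow 2).mul ((tendsto_add_atTop_iff_nat 1).2 hB0)
  refine (hB.summable hδ hq hpos).hasSum_iff_tendsto_nat.2 ?_
  simpa [hB.sum_range] using tendsto_const_nhds.sub hrem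

theorem le_max_one_sqrt (j : ℕ) : B j ≤ max 1 √q := by
  obtain ⟨J, hJ⟩ : ∃ J, ∀ i, B i ≤ B J := by
    refine continuous_of_discreteTopology.exists_forall_ge' 0 ?_
    rw [cocompact_eq_atTop, hB.apply_zero]
    exact (hB.tendsto_zero hδ hq hpos).eventually (eventually_le_nhds one_pos)
  refine (hJ j).trans ?_
  cases J with
  | zero => simp [hB.apply_zero]
  | succ J =>
    set M := B (J + 1)
    set x := B (J + 2)
    set s := δ * q ^ J
    have hs : 0 < s := by positivity
    have hxs : x + s ≤ M := by nlinarith [hB.sq_eq J, hJ J, hpos J, hpos (J + 1)]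
    have hM : M ^ 2 ≤ x * (M + q * s) := by
      have hnext : M ^ 2 = x * (B (J + 3) + q * s) := by
        rw [show q * s = δ * q ^ (J + 1) by ring]; exact hB.sq_eq (J + 1)
      rw [hnext]
      exact mul_le_mul_of_nonneg_left (by linarith [hJ (J + 3)]) (hpos _).le
    -- `M ^ 2 ≤ x * M + q * x * (M - x)` says `(q * x - M) * (M - x) ≥ 0`
    have hqx : M ≤ q * x := by
      have : M ^ 2 ≤ x * M + q * x * (M - x) := by
        nlinarith [mul_le_mul_of_nonneg_left (by linarith : s ≤ M - x)
          (mul_nonneg (by linarith : (0 : ℝ) ≤ q) (hpos (J + 2)).le)]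
      nlinarith
    have hxM : x * M ≤ 1 := by
      have := hB.antitone_mul_sq hδ.le (by linarith) (Nat.zero_le (J + 1))
      simp only [hB.apply_zero, one_pow, mul_one] at this
      nlinarith [hpos (J + 1), hJ 1]
    have : M ^ 2 ≤ q := by nlinarith [hpos (J + 1)]
    exact le_max_of_le_right (Real.le_sqrt_of_sq_le this)

end Positive

theorem apply_one_le (hδ : 0 < δ) (hq : 1 < q) (hB : IsReducedFixedPt δ q B)
    (hBpos : ∀ j, 0 < B j) (hC : IsReducedFixedPt δ q C) (hCpos : ∀ j, 0 < C j) :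
    B 1 ≤ C 1 := by
  by_contra! h
  set d : ℕ → ℝ := fun j => (-1) ^ j * (C j - B j) with hd_def
  have hid : ∀ j,
      B (j + 1) * d (j + 2) = d j * (C j + B j) + d (j + 1) * (C (j + 2) + δ * q ^ j) := by
    intro j
    simp only [hd_def]
    linear_combination (-1) ^ j * (hB.sq_eq j - hC.sq_eq j)
  have hd : ∀ j, 0 ≤ d j ∧ 0 < d (j + 1) := by
    intro j
    induction j with
    | zero => simp [hd_def, hB.apply_zero, hC.apply_zero, h]
    | succ j ih =>
      refine ⟨ih.2.le, pos_of_mul_pos_right (a := B (j + 1)) ?_ (hBpos _).le⟩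
      rw [hid j]
      have := hCpos j; have := hBpos j; have := hCpos (j + 2)
      exact add_pos_of_nonneg_of_pos (mul_nonneg ih.1 (by positivity))
        (mul_pos ih.2 (by positivity))
  obtain ⟨N, hN⟩ := eventually_atTop.1 <|
    (hB.tendsto_zero hδ hq hBpos).eventually (eventually_le_nhds hδ)
  have hmono : Monotone fun m => d (m + (N + 1)) := by
    refine monotone_nat_of_le_succ fun m => ?_
    have hBle : B (N + m + 1) ≤ δ * q ^ (N + m) :=
      (hN _ (by omega)).trans (le_mul_of_one_le_right hδ.le (one_le_pow₀ hq.le))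
    have hgrow : B (N + m + 1) * d (N + m + 1) ≤ B (N + m + 1) * d (N + m + 2) := by
      rw [hid (N + m)]
      have := hCpos (N + m); have := hBpos (N + m); have := hCpos (N + m + 2)
      nlinarith [mul_le_mul_of_nonneg_left hBle (hd (N + m)).2.le,
        mul_nonneg (hd (N + m)).1 (by positivity : 0 ≤ C (N + m) + B (N + m)),
        mul_pos (hd (N + m)).2 (hCpos (N + m + 2))]
    rw [show m + 1 + (N + 1) = N + m + 2 by omega, show m + (N + 1) = N + m + 1 by omega]
    exact le_of_mul_le_mul_left hgrow (hBpos _)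
  have hlim : Tendsto (fun m => d (m + (N + 1))) atTop (𝓝 0) := by
    have hdiff := ((hC.tendsto_zero hδ hq hCpos).sub (hB.tendsto_zero hδ hq hBpos))
    rw [sub_zero] at hdiff
    have : Tendsto d atTop (𝓝 0) :=
      squeeze_zero_norm (a := fun j => ‖C j - B j‖) (fun j => by simp [hd_def, norm_mul])
        (by simpa using hdiff.norm)
    exact this.comp (tendsto_add_atTop_nat (N + 1))
  have := hmono.ge_of_tendsto hlim 0
  simp only [zero_add] at this
  linarith [(hd N).2]

theorem eq_of_apply_one_eq (hB : IsReducedFixedPt δ q B) (hC : IsReducedFixedPt δ q C)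
    (hCpos : ∀ j, 0 < C j) (h1 : B 1 = C 1) : B = C := by
  have : ∀ j, B j = C j ∧ B (j + 1) = C (j + 1) := by
    intro j
    induction j with
    | zero => exact ⟨hB.apply_zero.trans hC.apply_zero.symm, h1⟩
    | succ j ih =>
      refine ⟨ih.2, ?_⟩
      have := hB.sq_eq j
      rw [ih.1, ih.2, hC.sq_eq j] at this
      have := mul_left_cancel₀ (hCpos (j + 1)).ne' this
      linarith
  exact funext fun j => (this j).1

theorem eq (hδ : 0 < δ) (hq : 1 < q) (hB : IsReducedFixedPt δ q B) (hBpos : ∀ j, 0 < B j)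
    (hC : IsReducedFixedPt δ q C) (hCpos : ∀ j, 0 < C j) : B = C :=
  hB.eq_of_apply_one_eq hC hCpos <|
    le_antisymm (hB.apply_one_le hδ hq hBpos hC hCpos) (hC.apply_one_le hδ hq hCpos hB hBpos)

theorem eq_one_of_le (hB : IsReducedFixedPt 0 q B) (hpos : ∀ j, 0 < B j) {K : ℝ}
    (hK : ∀ j, B j ≤ K) : B = 1 := by
  have hinv : ∀ j, B (j + 1) * B j ^ 2 = B 1 := by
    intro j
    induction j with
    | zero => simp [hB.apply_zero]
    | succ j ih =>
      rw [← ih, hB.sq_eq j]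
      ring
  set e : ℕ → ℝ := fun j => Real.log (B j) - Real.log (B 1) / 3 with he_def
  have hstep : ∀ j, e (j + 1) = -2 * e j := by
    intro j
    have := congrArg Real.log (hinv j)
    rw [Real.log_mul (hpos _).ne' (pow_pos (hpos j) 2).ne', Real.log_pow] at this
    push_cast at this
    simp only [he_def]
    linarith
  have hpow : ∀ j, e j = (-2) ^ j * e 0 := by
    intro j
    induction j with
    | zero => simp
    | succ j ih => rw [hstep, ih]; ring
  have hlog : ∀ j, Real.log (B j) ≤ Real.log K :=
    fun j => Real.log_le_log (hpos j) (hK j)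
  have hbdd : ∀ j, |e (j + 1)| ≤ 2 * |Real.log K| + |Real.log (B 1)| := by
    intro j
    have h1 := hlog (j + 1)
    have h2 : Real.log (B 1) - 2 * Real.log (B j) ≤ Real.log (B (j + 1)) := by
      have := hstep j
      simp only [he_def] at this
      linarith
    have h3 := hlog j
    rw [abs_le]
    simp only [he_def]
    constructor <;> linarith [le_abs_self (Real.log K), neg_abs_le (Real.log K),
      le_abs_self (Real.log (B 1)), neg_abs_le (Real.log (B 1))]
  have he0 : e 0 = 0 := by
    by_contra hne
    obtain ⟨n, hn⟩ := pow_unbounded_of_one_lt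
      ((2 * |Real.log K| + |Real.log (B 1)|) / |e 0|) (by norm_num : (1 : ℝ) < 2)
    rw [div_lt_iff₀ (abs_pos.2 hne)] at hn
    have := hbdd n
    rw [hpow, abs_mul, abs_pow, abs_neg, abs_two] at this
    linarith [mul_le_mul_of_nonneg_right
      (pow_le_pow_right₀ (by norm_num : (1 : ℝ) ≤ 2) (Nat.le_add_right n 1)) (abs_nonneg (e 0))]
  have hL1 : Real.log (B 1) = 0 := by
    simp only [he_def, hB.apply_zero, Real.log_one] at he0
    linarith
  funext j
  have : e j = 0 := by rw [hpow, he0, mul_zero]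
  simp only [he_def, hL1, zero_div, sub_zero] at this
  exact Real.eq_one_of_pos_of_log_eq_zero (hpos j) this

end IsReducedFixedPt

-- `backward δ q n t i = B (n + 2 - i)` for the solution of the system truncated by
-- `B (n + 2) = 0`, `B (n + 1) = t`, solved backwards
noncomputable def backward (δ q : ℝ) (n : ℕ) (t : ℝ) : ℕ → ℝ
  | 0 => 0
  | 1 => t
  | i + 2 => √(backward δ q n t (i + 1) * (backward δ q n t i + δ * q ^ (n - i)))

section Backward

variable {δ q : ℝ} {n : ℕ}

theorem backward_nonneg {t : ℝ} (ht : 0 ≤ t) : ∀ i, 0 ≤ backward δ q n t i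
  | 0 => le_rfl
  | 1 => ht
  | _ + 2 => Real.sqrt_nonneg _

theorem backward_pos (hδ : 0 < δ) (hq : 0 < q) {t : ℝ} (ht : 0 < t) (i : ℕ) :
    0 < backward δ q n t (i + 1) := by
  induction i with
  | zero => exact ht
  | succ i ih =>
    have := backward_nonneg (δ := δ) (q := q) (n := n) ht.le i
    exact Real.sqrt_pos.2 (mul_pos ih (by positivity))

theorem backward_start_zero : ∀ i, backward δ q n 0 i = 0
  | 0 => rfl
  | 1 => rfl
  | i + 2 => by simp [backward, backward_start_zero (i + 1)]

theorem continuous_backward : ∀ i, Continuous fun t => backward δ q n t i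
  | 0 => continuous_const
  | 1 => continuous_id
  | i + 2 =>
    ((continuous_backward (i + 1)).mul ((continuous_backward i).add continuous_const)).sqrt

theorem tendsto_backward (hδ : 0 < δ) (hq : 0 < q) (i : ℕ) :
    Tendsto (fun t => backward δ q n t (i + 1)) atTop atTop := by
  induction i with
  | zero => exact tendsto_id
  | succ i ih =>
    refine tendsto_atTop_mono' _ ?_ <|
      Real.tendsto_sqrt_atTop.comp (ih.atTop_mul_const (r := δ * q ^ (n - i)) (by positivity))
    filter_upwards [eventually_ge_atTop 0] with t ht
    have := backward_nonneg (δ := δ) (q := q) (n := n) ht i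
    have := backward_nonneg (δ := δ) (q := q) (n := n) ht (i + 1)
    exact Real.sqrt_le_sqrt (by nlinarith)

end Backward

structure IsTruncatedFixedPt (δ q : ℝ) (n : ℕ) (B : ℕ → ℝ) : Prop where
  apply_zero : B 0 = 1
  pos : ∀ j ≤ n + 1, 0 < B j
  eq_zero : ∀ j, n + 2 ≤ j → B j = 0
  sq_eq : ∀ j ≤ n, B j ^ 2 = B (j + 1) * (B (j + 2) + δ * q ^ j)

theorem exists_isTruncatedFixedPt {δ q : ℝ} (hδ : 0 < δ) (hq : 0 < q) (n : ℕ) :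
    ∃ B, IsTruncatedFixedPt δ q n B := by
  obtain ⟨t, ht, hBt⟩ : ∃ t ∈ Set.Ici (0 : ℝ), backward δ q n t (n + 2) = 1 :=
    intermediate_value_Ici (continuous_backward _).continuousOn (tendsto_backward hδ hq (n + 1))
      (by simp [backward_start_zero])
  have ht : 0 < t := lt_of_le_of_ne ht fun h => by simp [← h, backward_start_zero] at hBt
  refine ⟨fun j => backward δ q n t (n + 2 - j), hBt, fun j hj => ?_, fun j hj => ?_,
    fun j hj => ?_⟩
  · rw [show n + 2 - j = n + 1 - j + 1 by omega]
    exact backward_pos hδ hq ht _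
  · rw [Nat.sub_eq_zero_of_le hj]; rfl
  · rw [show n + 2 - j = n - j + 2 by omega, show n + 2 - (j + 1) = n - j + 1 by omega,
      show n + 2 - (j + 2) = n - j by omega, backward, Real.sq_sqrt, Nat.sub_sub_self hj]
    have := backward_nonneg (δ := δ) (q := q) (n := n) ht.le (n - j)
    have := backward_nonneg (δ := δ) (q := q) (n := n) ht.le (n - j + 1)
    positivity

noncomputable def upperBound (δ q : ℝ) : ℕ → ℝ
  | 0 => 1
  | j + 1 => upperBound δ q j ^ 2 / (δ * q ^ j)

noncomputable def lowerBound (U D : ℕ → ℝ) : ℕ → ℝ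
  | 0 => 1
  | j + 1 => lowerBound U D j ^ 2 / (U (j + 2) + D j)

section Bounds

variable {U D B c : ℕ → ℝ}

theorem lowerBound_pos (hUD : ∀ j, 0 < U (j + 2) + D j) (j : ℕ) : 0 < lowerBound U D j := by
  induction j with
  | zero => exact one_pos
  | succ j ih => exact div_pos (pow_pos ih 2) (hUD j)

theorem lowerBound_le (hUD : ∀ j, 0 < U (j + 2) + D j) (hB0 : B 0 = 1) (hnn : ∀ j, 0 ≤ B j)
    (hU : ∀ j, B j ≤ U j) (hc : ∀ j, c j ≤ D j) (n : ℕ)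
    (hrec : ∀ j < n, B j ^ 2 = B (j + 1) * (B (j + 2) + c j)) : lowerBound U D n ≤ B n := by
  induction n with
  | zero => exact hB0.ge
  | succ n ih =>
    have hsq : lowerBound U D n ^ 2 ≤ B n ^ 2 :=
      pow_le_pow_left₀ (lowerBound_pos hUD n).le (ih fun j hj => hrec j (by omega)) 2
    rw [lowerBound, div_le_iff₀ (hUD n)]
    calc lowerBound U D n ^ 2 ≤ B (n + 1) * (B (n + 2) + c n) :=
          hsq.trans (hrec n n.lt_succ_self).le
      _ ≤ B (n + 1) * (U (n + 2) + D n) :=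
        mul_le_mul_of_nonneg_left (add_le_add (hU _) (hc n)) (hnn _)

variable {δ q : ℝ} {n : ℕ}

theorem upperBound_pos (hδ : 0 < δ) (hq : 0 < q) (j : ℕ) : 0 < upperBound δ q j := by
  induction j with
  | zero => exact one_pos
  | succ j ih => exact div_pos (pow_pos ih 2) (by positivity)

namespace IsTruncatedFixedPt

theorem nonneg (hB : IsTruncatedFixedPt δ q n B) (j : ℕ) : 0 ≤ B j := by
  rcases le_or_gt j (n + 1) with h | h
  · exact (hB.pos j h).le
  · exact (hB.eq_zero j h).ge

theorem le_upperBound (hδ : 0 < δ) (hq : 0 < q) (hB : IsTruncatedFixedPt δ q n B) (j : ℕ) :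
    B j ≤ upperBound δ q j := by
  induction j with
  | zero => exact hB.apply_zero.le
  | succ j ih =>
    rw [upperBound, le_div_iff₀ (by positivity)]
    rcases le_or_gt j n with h | h
    · have := hB.sq_eq j h
      have := hB.nonneg (j + 1); have := hB.nonneg (j + 2)
      nlinarith [pow_le_pow_left₀ (hB.nonneg j) ih 2]
    · rw [hB.eq_zero (j + 1) (by omega), zero_mul]
      positivity

theorem lowerBound_le (hδ : 0 < δ) (hq : 0 < q) (hB : IsTruncatedFixedPt δ q n B) {j : ℕ}
    (hj : j ≤ n + 1) : lowerBound (upperBound δ q) (fun i => δ * q ^ i) j ≤ B j :=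
  DyadicModel.lowerBound_le
    (fun i => add_pos (upperBound_pos hδ hq _) (by positivity))
    hB.apply_zero hB.nonneg (hB.le_upperBound hδ hq) (fun _ => le_rfl) j
    fun i hi => hB.sq_eq i (by omega)

end IsTruncatedFixedPt

theorem IsReducedFixedPt.lowerBound_le (hδ : 0 < δ) (hδ1 : δ ≤ 1) (hq : 1 < q)
    (hB : IsReducedFixedPt δ q B) (hpos : ∀ j, 0 < B j) (j : ℕ) :
    lowerBound (fun _ => max 1 √q) (q ^ ·) j ≤ B j :=
  DyadicModel.lowerBound_le (fun i => by positivity) hB.apply_zero (fun i => (hpos i).le)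
    (hB.le_max_one_sqrt hδ hq hpos) (fun i => mul_le_of_le_one_left (by positivity) hδ1) j
    fun i _ => hB.sq_eq i

end Bounds

theorem exists_isReducedFixedPt_tendsto_subseq {F : ℕ → ℕ → ℝ} {δs : ℕ → ℝ} {δ q : ℝ}
    {l u : ℕ → ℝ} (hF : ∀ᶠ n in atTop, ∀ j, F n j ∈ Set.Icc 0 (u j))
    (hl : ∀ j, ∀ᶠ n in atTop, l j ≤ F n j) (hδs : Tendsto δs atTop (𝓝 δ))
    (h0 : ∀ᶠ n in atTop, F n 0 = 1)
    (hrec : ∀ j, ∀ᶠ n in atTop, F n j ^ 2 = F n (j + 1) * (F n (j + 2) + δs n * q ^ j)) :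
    ∃ L, IsReducedFixedPt δ q L ∧ (∀ j, L j ∈ Set.Icc (l j) (u j)) ∧
      ∃ φ : ℕ → ℕ, StrictMono φ ∧ Tendsto (F ∘ φ) atTop (𝓝 L) := by
  obtain ⟨L, hLmem, φ, hφ, hlim⟩ := (isCompact_univ_pi fun j => isCompact_Icc).tendsto_subseq'
    (hF.mono fun n hn => Set.mem_univ_pi.2 hn).frequently
  have hcoord : ∀ j, Tendsto (fun n => F (φ n) j) atTop (𝓝 (L j)) := tendsto_pi_nhds.1 hlim
  have hsub {P : ℕ → Prop} (h : ∀ᶠ n in atTop, P n) : ∀ᶠ n in atTop, P (φ n) :=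
    hφ.tendsto_atTop.eventually h
  refine ⟨L, ⟨?_, fun j => ?_⟩, fun j => ⟨?_, (Set.mem_univ_pi.1 hLmem j).2⟩, φ, hφ, hlim⟩
  · exact tendsto_nhds_unique (hcoord 0)
      (tendsto_const_nhds.congr' ((hsub h0).mono fun n hn => hn.symm))
  · refine tendsto_nhds_unique ((hcoord j).pow 2) (Tendsto.congr' ?_ <|
      (hcoord (j + 1)).mul ((hcoord (j + 2)).add ((hδs.comp hφ.tendsto_atTop).mul_const _)))
    exact (hsub (hrec j)).mono fun n hn => hn.symm
  · exact ge_of_tendsto (hcoord j) (hsub (hl j))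

theorem exists_isReducedFixedPt {δ q : ℝ} (hδ : 0 < δ) (hq : 0 < q) :
    ∃ B, IsReducedFixedPt δ q B ∧ ∀ j, 0 < B j := by
  choose G hG using exists_isTruncatedFixedPt hδ hq
  obtain ⟨L, hL, hLmem, -⟩ := exists_isReducedFixedPt_tendsto_subseq (F := G) (δs := fun _ => δ)
    (.of_forall fun n j => ⟨(hG n).nonneg j, (hG n).le_upperBound hδ hq j⟩)
    (fun j => (eventually_ge_atTop j).mono fun n hn => (hG n).lowerBound_le hδ hq (by omega))
    tendsto_const_nhds (.of_forall fun n => (hG n).apply_zero)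
    (fun j => (eventually_ge_atTop j).mono fun n hn => (hG n).sq_eq j hn)
  exact ⟨L, hL, fun j => (lowerBound_pos
    (fun i => add_pos (upperBound_pos hδ hq _) (by positivity)) j).trans_le (hLmem j).1⟩

noncomputable def reducedSol (δ q : ℝ) : ℕ → ℝ :=
  Classical.epsilon fun B => IsReducedFixedPt δ q B ∧ ∀ j, 0 < B j

theorem reducedSol_spec {δ q : ℝ} (hδ : 0 < δ) (hq : 0 < q) :
    IsReducedFixedPt δ q (reducedSol δ q) ∧ ∀ j, 0 < reducedSol δ q j :=
  Classical.epsilon_spec (exists_isReducedFixedPt hδ hq)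

theorem tendsto_reducedSol {q : ℝ} (hq : 1 < q) :
    Tendsto (fun δ => reducedSol δ q) (𝓝[>] 0) (𝓝 1) := by
  have hUD : ∀ j, 0 < max 1 √q + q ^ j := fun j => by positivity
  have spec {δ : ℝ} (hδ : 0 < δ) := reducedSol_spec hδ (zero_lt_one.trans hq)
  rw [tendsto_iff_seq_tendsto]
  intro δs hδs
  obtain ⟨hδs0, hδspos⟩ := tendsto_nhdsWithin_iff.1 hδs
  refine tendsto_of_subseq_tendsto fun ns hns => ?_
  have hsmall : ∀ᶠ n in atTop, 0 < δs (ns n) ∧ δs (ns n) ≤ 1 :=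
    hns.eventually (hδspos.and (hδs0.eventually (eventually_le_nhds one_pos)))
  obtain ⟨L, hL, hLmem, φ, -, hφ⟩ := exists_isReducedFixedPt_tendsto_subseq
    (F := fun n => reducedSol (δs (ns n)) q) (δs := fun n => δs (ns n)) (δ := 0)
    (l := lowerBound (fun _ => max 1 √q) (q ^ ·)) (u := fun _ => max 1 √q)
    (hsmall.mono fun n hn j =>
      ⟨((spec hn.1).2 j).le, (spec hn.1).1.le_max_one_sqrt hn.1 hq (spec hn.1).2 j⟩)
    (fun j => hsmall.mono fun n hn => (spec hn.1).1.lowerBound_le hn.1 hn.2 hq (spec hn.1).2 j)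
    (hδs0.comp hns) (hsmall.mono fun n hn => (spec hn.1).1.apply_zero)
    (fun j => hsmall.mono fun n hn => (spec hn.1).1.sq_eq j)
  rw [hL.eq_one_of_le (fun j => (lowerBound_pos hUD j).trans_le (hLmem j).1)
    (fun j => (hLmem j).2)] at hφ
  exact ⟨φ, hφ⟩

noncomputable def reducedRatio (lam θ : ℝ) : ℝ := lam ^ ((6 - 2 * θ) / 3)

noncomputable def reducedViscosity (lam θ f0 ν : ℝ) : ℝ := ν / (√f0 * lam ^ (θ / 3))

noncomputable def ofReduced (lam θ f0 : ℝ) (B : ℕ → ℝ) (j : ℕ) : ℝ := astar lam θ f0 j * B (j + 1)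

noncomputable def toReduced (lam θ f0 : ℝ) (c : ℕ → ℝ) : ℕ → ℝ
  | 0 => 1
  | j + 1 => c j / astar lam θ f0 j

section Transfer

variable {lam θ f0 ν : ℝ} {B : ℕ → ℝ}

theorem astar_eq (hlam : 0 < lam) (j : ℕ) :
    astar lam θ f0 j = √f0 / (lam ^ (θ / 3)) ^ (j + 1) := by
  rw [astar, ← Real.rpow_mul_natCast hlam.le, div_eq_mul_inv √f0, ← Real.rpow_neg hlam.le]
  push_cast
  ring_nf

theorem pow_rpow_eq (hlam : 0 < lam) (j : ℕ) : (lam ^ j) ^ θ = (lam ^ (θ / 3)) ^ (3 * j) := by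
  rw [← Real.rpow_natCast lam, ← Real.rpow_mul hlam.le, ← Real.rpow_mul_natCast hlam.le]
  push_cast
  ring_nf

theorem reducedRatio_eq (hlam : 0 < lam) :
    reducedRatio lam θ = lam ^ 2 / (lam ^ (θ / 3)) ^ 2 := by
  rw [reducedRatio, ← Real.rpow_mul_natCast hlam.le, div_eq_mul_inv (lam ^ 2),
    ← Real.rpow_neg hlam.le, ← Real.rpow_natCast lam 2, ← Real.rpow_add hlam]
  push_cast
  ring_nf

theorem astar_pos (hlam : 0 < lam) (hf0 : 0 < f0) (j : ℕ) : 0 < astar lam θ f0 j := by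
  rw [astar_eq hlam]
  have := Real.sqrt_pos.2 hf0
  positivity

theorem inflow_ofReduced (hlam : 0 < lam) (hf0 : 0 ≤ f0) (hB0 : B 0 = 1) (j : ℕ) :
    (lam ^ j) ^ θ * (if j = 0 then 0 else ofReduced lam θ f0 B (j - 1)) ^ 2
        + (if j = 0 then f0 else 0) = f0 * (lam ^ (θ / 3)) ^ j * B j ^ 2 := by
  cases j with
  | zero => simp [hB0]
  | succ j =>
    have hu : lam ^ (θ / 3) ≠ 0 := (Real.rpow_pos_of_pos hlam _).ne'
    simp only [Nat.add_one_ne_zero, if_false, add_zero, Nat.add_sub_cancel, ofReduced,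
      astar_eq hlam, pow_rpow_eq hlam]
    generalize lam ^ (θ / 3) = u at hu ⊢
    field_simp
    rw [Real.sq_sqrt hf0]
    ring

theorem outflow_ofReduced (hlam : 0 < lam) (hf0 : 0 ≤ f0) (j : ℕ) :
    (lam ^ (j + 1)) ^ θ * ofReduced lam θ f0 B j * ofReduced lam θ f0 B (j + 1)
      = f0 * (lam ^ (θ / 3)) ^ j * (B (j + 1) * B (j + 2)) := by
  have hu : lam ^ (θ / 3) ≠ 0 := (Real.rpow_pos_of_pos hlam _).ne'
  simp only [ofReduced, astar_eq hlam, pow_rpow_eq hlam]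
  generalize lam ^ (θ / 3) = u at hu ⊢
  field_simp
  rw [Real.sq_sqrt hf0]
  ring

theorem dissipation_ofReduced (hlam : 0 < lam) (hf0 : 0 < f0) (j : ℕ) :
    ν * (lam ^ j) ^ 2 * ofReduced lam θ f0 B j = f0 * (lam ^ (θ / 3)) ^ j *
      (reducedViscosity lam θ f0 ν * reducedRatio lam θ ^ j * B (j + 1)) := by
  have hu : lam ^ (θ / 3) ≠ 0 := (Real.rpow_pos_of_pos hlam _).ne'
  have hs : √f0 ≠ 0 := (Real.sqrt_pos.2 hf0).ne'
  simp only [ofReduced, astar_eq hlam, reducedRatio_eq hlam, reducedViscosity, div_pow]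
  generalize lam ^ (θ / 3) = u at hu ⊢
  field_simp
  rw [Real.sq_sqrt hf0.le]
  ring

theorem isViscFixedPt_ofReduced_iff (hlam : 0 < lam) (hf0 : 0 < f0) (hB0 : B 0 = 1) :
    IsViscFixedPt lam θ f0 ν (ofReduced lam θ f0 B) ↔
      IsReducedFixedPt (reducedViscosity lam θ f0 ν) (reducedRatio lam θ) B := by
  have hres : ∀ j, -(ν * (lam ^ j) ^ 2 * ofReduced lam θ f0 B j)
      + (lam ^ j) ^ θ * (if j = 0 then (0 : ℝ) else ofReduced lam θ f0 B (j - 1)) ^ 2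
      - (lam ^ (j + 1)) ^ θ * ofReduced lam θ f0 B j * ofReduced lam θ f0 B (j + 1)
      + (if j = 0 then f0 else 0) = f0 * (lam ^ (θ / 3)) ^ j * (B j ^ 2 - B (j + 1) *
        (B (j + 2) + reducedViscosity lam θ f0 ν * reducedRatio lam θ ^ j)) := fun j => by
    linear_combination inflow_ofReduced hlam hf0.le hB0 j - outflow_ofReduced hlam hf0.le j
      - dissipation_ofReduced hlam hf0 j
  have hfac : ∀ j, f0 * (lam ^ (θ / 3)) ^ j ≠ 0 :=
    fun j => mul_ne_zero hf0.ne' (pow_ne_zero _ (Real.rpow_pos_of_pos hlam _).ne')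
  simp only [IsViscFixedPt, hres, mul_eq_zero, hfac, false_or, sub_eq_zero]
  exact ⟨fun h => ⟨hB0, h⟩, fun h => h.sq_eq⟩

theorem ofReduced_toReduced (hlam : 0 < lam) (hf0 : 0 < f0) (c : ℕ → ℝ) :
    ofReduced lam θ f0 (toReduced lam θ f0 c) = c :=
  funext fun j => mul_div_cancel₀ _ (astar_pos hlam hf0 j).ne'

theorem toReduced_pos (hlam : 0 < lam) (hf0 : 0 < f0) {c : ℕ → ℝ} (hc : ∀ j, 0 < c j) :
    ∀ j, 0 < toReduced lam θ f0 c j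
  | 0 => one_pos
  | j + 1 => div_pos (hc j) (astar_pos hlam hf0 j)

theorem summable_astar_sq (hlam : 1 < lam) (hθ : 0 < θ) :
    Summable fun j => astar lam θ f0 j ^ 2 := by
  have hu : 1 < lam ^ (θ / 3) := Real.one_lt_rpow hlam (by positivity)
  have hr : ((lam ^ (θ / 3)) ^ 2)⁻¹ < 1 := inv_lt_one_of_one_lt₀ (one_lt_pow₀ hu two_ne_zero)
  refine ((summable_geometric_of_lt_one (by positivity) hr).mul_left
    ((√f0 / lam ^ (θ / 3)) ^ 2)).congr fun j => ?_
  have : lam ^ (θ / 3) ≠ 0 := by positivity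
  rw [astar_eq (by positivity), inv_pow]
  generalize lam ^ (θ / 3) = u at this ⊢
  field_simp
  ring

theorem hasSum_sq_mul_ofReduced (hlam : 0 < lam) (hf0 : 0 < f0) (hν : 0 < ν)
    (hq : 1 < reducedRatio lam θ)
    (hB : IsReducedFixedPt (reducedViscosity lam θ f0 ν) (reducedRatio lam θ) B)
    (hpos : ∀ j, 0 < B j) :
    HasSum (fun j => (lam ^ j) ^ 2 * ofReduced lam θ f0 B j ^ 2)
      (f0 * ofReduced lam θ f0 B 0 / ν) := by
  have hu : lam ^ (θ / 3) ≠ 0 := (Real.rpow_pos_of_pos hlam _).ne'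
  have hs : √f0 ≠ 0 := (Real.sqrt_pos.2 hf0).ne'
  have hδ : 0 < reducedViscosity lam θ f0 ν := by unfold reducedViscosity; positivity
  have hterm : (fun j => (lam ^ j) ^ 2 * ofReduced lam θ f0 B j ^ 2) = fun j =>
      f0 * √f0 / lam ^ (θ / 3) / ν *
        (reducedViscosity lam θ f0 ν * reducedRatio lam θ ^ j * B (j + 1) ^ 2) := by
    funext j
    simp only [ofReduced, astar_eq hlam, reducedRatio_eq hlam, reducedViscosity, div_pow]
    generalize lam ^ (θ / 3) = u at hu ⊢
    field_simp
    rw [Real.sq_sqrt hf0.le]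
    ring
  have hsum : f0 * ofReduced lam θ f0 B 0 / ν = f0 * √f0 / lam ^ (θ / 3) / ν * B 1 := by
    simp only [ofReduced, astar_eq hlam]
    ring
  rw [hterm, hsum]
  exact (hB.hasSum hδ hq hpos).mul_left _

end Transfer

noncomputable def viscFixedPt (lam θ f0 ν : ℝ) : ℕ → ℝ :=
  ofReduced lam θ f0 (reducedSol (reducedViscosity lam θ f0 ν) (reducedRatio lam θ))

section ViscFixedPt

variable {lam θ f0 ν : ℝ}

theorem one_lt_reducedRatio (hlam : 1 < lam) (hθ : θ < 3) : 1 < reducedRatio lam θ :=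
  Real.one_lt_rpow hlam (by linarith)

theorem reducedViscosity_pos (hlam : 0 < lam) (hf0 : 0 < f0) (hν : 0 < ν) :
    0 < reducedViscosity lam θ f0 ν := by
  have := Real.sqrt_pos.2 hf0
  unfold reducedViscosity
  positivity

theorem tendsto_reducedViscosity (hlam : 0 < lam) (hf0 : 0 < f0) :
    Tendsto (reducedViscosity lam θ f0) (𝓝[>] 0) (𝓝[>] 0) := by
  refine tendsto_nhdsWithin_iff.2 ⟨?_, eventually_nhdsWithin_of_forall fun ν hν =>
    reducedViscosity_pos hlam hf0 hν⟩
  have : Tendsto (fun ν : ℝ => ν / (√f0 * lam ^ (θ / 3))) (𝓝 0) (𝓝 0) := by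
    simpa using (continuous_id.div_const (√f0 * lam ^ (θ / 3))).tendsto 0
  exact this.mono_left nhdsWithin_le_nhds

theorem reducedSol_reducedViscosity_spec (hlam : 1 < lam) (hθ : θ < 3) (hf0 : 0 < f0)
    (hν : 0 < ν) :
    IsReducedFixedPt (reducedViscosity lam θ f0 ν) (reducedRatio lam θ)
        (reducedSol (reducedViscosity lam θ f0 ν) (reducedRatio lam θ)) ∧
      ∀ j, 0 < reducedSol (reducedViscosity lam θ f0 ν) (reducedRatio lam θ) j :=
  reducedSol_spec (reducedViscosity_pos (zero_lt_one.trans hlam) hf0 hν)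
    (zero_lt_one.trans (one_lt_reducedRatio hlam hθ))

theorem viscFixedPt_pos (hlam : 1 < lam) (hθ : θ < 3) (hf0 : 0 < f0) (hν : 0 < ν) (j : ℕ) :
    0 < viscFixedPt lam θ f0 ν j :=
  mul_pos (astar_pos (zero_lt_one.trans hlam) hf0 j)
    ((reducedSol_reducedViscosity_spec hlam hθ hf0 hν).2 _)

theorem viscFixedPt_le (hlam : 1 < lam) (hθ : θ < 3) (hf0 : 0 < f0) (hν : 0 < ν) (j : ℕ) :
    viscFixedPt lam θ f0 ν j ≤ astar lam θ f0 j * max 1 √(reducedRatio lam θ) := by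
  obtain ⟨hB, hpos⟩ := reducedSol_reducedViscosity_spec hlam hθ hf0 hν
  exact mul_le_mul_of_nonneg_left (hB.le_max_one_sqrt (reducedViscosity_pos
    (zero_lt_one.trans hlam) hf0 hν) (one_lt_reducedRatio hlam hθ) hpos _)
    (astar_pos (zero_lt_one.trans hlam) hf0 j).le

theorem isViscFixedPt_viscFixedPt (hlam : 1 < lam) (hθ : θ < 3) (hf0 : 0 < f0) (hν : 0 < ν) :
    IsViscFixedPt lam θ f0 ν (viscFixedPt lam θ f0 ν) :=
  have hB := (reducedSol_reducedViscosity_spec hlam hθ hf0 hν).1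
  (isViscFixedPt_ofReduced_iff (zero_lt_one.trans hlam) hf0 hB.apply_zero).2 hB

theorem eq_viscFixedPt (hlam : 1 < lam) (hθ : θ < 3) (hf0 : 0 < f0) (hν : 0 < ν)
    {c : ℕ → ℝ} (hc : ∀ j, 0 < c j) (hfix : IsViscFixedPt lam θ f0 ν c) :
    c = viscFixedPt lam θ f0 ν := by
  have hlam0 : 0 < lam := zero_lt_one.trans hlam
  obtain ⟨hB, hBpos⟩ := reducedSol_reducedViscosity_spec hlam hθ hf0 hν
  rw [← ofReduced_toReduced hlam0 hf0 c] at hfix ⊢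
  have hC := (isViscFixedPt_ofReduced_iff hlam0 hf0 rfl).1 hfix
  rw [viscFixedPt, hC.eq (reducedViscosity_pos hlam0 hf0 hν) (one_lt_reducedRatio hlam hθ)
    (toReduced_pos hlam0 hf0 hc) hB hBpos]

theorem summable_viscFixedPt_sq (hlam : 1 < lam) (hθ0 : 0 < θ) (hθ : θ < 3) (hf0 : 0 < f0)
    (hν : 0 < ν) : Summable fun j => viscFixedPt lam θ f0 ν j ^ 2 := by
  refine ((summable_astar_sq (f0 := f0) hlam hθ0).mul_right
    (max 1 √(reducedRatio lam θ) ^ 2)).of_nonneg_of_le (fun j => sq_nonneg _) fun j => ?_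
  rw [← mul_pow]
  exact pow_le_pow_left₀ (viscFixedPt_pos hlam hθ hf0 hν j).le (viscFixedPt_le hlam hθ hf0 hν j) 2

theorem hasSum_sq_mul_viscFixedPt (hlam : 1 < lam) (hθ : θ < 3) (hf0 : 0 < f0) (hν : 0 < ν) :
    HasSum (fun j => (lam ^ j) ^ 2 * viscFixedPt lam θ f0 ν j ^ 2)
      (f0 * viscFixedPt lam θ f0 ν 0 / ν) :=
  have hB := reducedSol_reducedViscosity_spec hlam hθ hf0 hν
  hasSum_sq_mul_ofReduced (zero_lt_one.trans hlam) hf0 hν (one_lt_reducedRatio hlam hθ) hB.1 hB.2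

theorem dissipation_viscFixedPt (hlam : 1 < lam) (hθ : θ < 3) (hf0 : 0 < f0) (hν : 0 < ν) :
    ν * ∑' j, (lam ^ j) ^ 2 * viscFixedPt lam θ f0 ν j ^ 2 = f0 * viscFixedPt lam θ f0 ν 0 := by
  rw [(hasSum_sq_mul_viscFixedPt hlam hθ hf0 hν).tsum_eq]
  field_simp

theorem tendsto_viscFixedPt (hlam : 1 < lam) (hθ : θ < 3) (hf0 : 0 < f0) (j : ℕ) :
    Tendsto (fun ν => viscFixedPt lam θ f0 ν j) (𝓝[>] 0) (𝓝 (astar lam θ f0 j)) := by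
  have h := tendsto_pi_nhds.1 ((tendsto_reducedSol (one_lt_reducedRatio hlam hθ)).comp
    (tendsto_reducedViscosity (θ := θ) (zero_lt_one.trans hlam) hf0)) (j + 1)
  simpa [viscFixedPt, ofReduced] using h.const_mul (astar lam θ f0 j)

theorem tendsto_tsum_sq_viscFixedPt_sub_astar (hlam : 1 < lam) (hθ0 : 0 < θ) (hθ : θ < 3)
    (hf0 : 0 < f0) :
    Tendsto (fun ν => ∑' j, (viscFixedPt lam θ f0 ν j - astar lam θ f0 j) ^ 2) (𝓝[>] 0) (𝓝 0) := by
  set K := max 1 √(reducedRatio lam θ)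
  have hbound : ∀ᶠ ν in 𝓝[>] 0, ∀ j,
      ‖(viscFixedPt lam θ f0 ν j - astar lam θ f0 j) ^ 2‖ ≤ astar lam θ f0 j ^ 2 * K ^ 2 := by
    refine eventually_nhdsWithin_of_forall fun ν hν j => ?_
    have h1 := viscFixedPt_pos hlam hθ hf0 hν j
    have h2 := viscFixedPt_le hlam hθ hf0 hν j
    have h3 := astar_pos (θ := θ) (zero_lt_one.trans hlam) hf0 j
    have h4 : 1 ≤ K := le_max_left _ _
    rw [Real.norm_of_nonneg (sq_nonneg _), ← mul_pow]
    exact sq_le_sq' (by nlinarith) (by nlinarith)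
  simpa using tendsto_tsum_of_dominated_convergence (g := fun _ => 0)
    ((summable_astar_sq hlam hθ0).mul_right _)
    (fun j => by
      simpa using ((tendsto_viscFixedPt hlam hθ hf0 j).sub_const (astar lam θ f0 j)).pow 2)
    hbound

end ViscFixedPt

end DyadicModel

open DyadicModel in
/-- Cheskidov–Friedlander: for every `ν > 0` the viscous forced dyadic model has a
unique positive finite-energy fixed point `a^{ν,*}`, with energy dissipation rate
`ε^ν = ν Σ_j λ_j² (a^{ν,*}_j)² = f₀ a^{ν,*}₀`; moreover `a^{ν,*} → a*` in `ℓ²` as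
`ν → 0` and the dissipation anomaly holds: `ε^ν → f₀ a*₀ > 0`. -/
theorem viscous_fixed_point_dissipation_anomaly (lam θ f0 : ℝ) (hlam : 1 < lam)
    (hθ1 : 1 ≤ θ) (hθ2 : θ ≤ 5 / 2) (hf0 : 0 < f0) :
    ∃ A : ℝ → ℕ → ℝ,
      (∀ ν : ℝ, 0 < ν →
        (∀ j : ℕ, 0 < A ν j) ∧
        Summable (fun j : ℕ => (A ν j) ^ 2) ∧
        IsViscFixedPt lam θ f0 ν (A ν) ∧
        (∀ c : ℕ → ℝ, (∀ j, 0 < c j) → Summable (fun j : ℕ => (c j) ^ 2) →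
          IsViscFixedPt lam θ f0 ν c → c = A ν) ∧
        Summable (fun j : ℕ => (lam ^ j) ^ 2 * (A ν j) ^ 2) ∧
        ν * (∑' j : ℕ, (lam ^ j) ^ 2 * (A ν j) ^ 2) = f0 * A ν 0) ∧
      Tendsto (fun ν : ℝ => ∑' j : ℕ, (A ν j - astar lam θ f0 j) ^ 2)
        (nhdsWithin 0 (Set.Ioi 0)) (nhds 0) ∧
      Tendsto (fun ν : ℝ => ν * ∑' j : ℕ, (lam ^ j) ^ 2 * (A ν j) ^ 2)
        (nhdsWithin 0 (Set.Ioi 0)) (nhds (f0 * astar lam θ f0 0)) ∧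
      0 < f0 * astar lam θ f0 0 := by
  have hθ0 : 0 < θ := by linarith
  have hθ3 : θ < 3 := by linarith
  refine ⟨viscFixedPt lam θ f0, fun ν hν => ⟨viscFixedPt_pos hlam hθ3 hf0 hν,
    summable_viscFixedPt_sq hlam hθ0 hθ3 hf0 hν, isViscFixedPt_viscFixedPt hlam hθ3 hf0 hν,
    fun c hc _ hfix => eq_viscFixedPt hlam hθ3 hf0 hν hc hfix,
    (hasSum_sq_mul_viscFixedPt hlam hθ3 hf0 hν).summable,
    dissipation_viscFixedPt hlam hθ3 hf0 hν⟩,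
    tendsto_tsum_sq_viscFixedPt_sub_astar hlam hθ0 hθ3 hf0, ?_,
    mul_pos hf0 (astar_pos (zero_lt_one.trans hlam) hf0 0)⟩
  refine ((tendsto_viscFixedPt hlam hθ3 hf0 0).const_mul f0).congr' ?_
  filter_upwards [self_mem_nhdsWithin] with ν hν
  exact (dissipation_viscFixedPt hlam hθ3 hf0 hν).symm
end
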